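/- arXiv:2412.03774 — 14 statements merged into one kernel-verified Lean document; each statement's English description precedes it below -/
import Mathlib

section
/- For every integer m ≥ 1 and every real b with 0 < b < 1, the inequality -ln(1-x) ≤ x + x²/2 + x³/3 + ... + xᵐ/m + a·|x|^(m+1) holds for all x with |x| ≤ b when a = θ_m(b) := Σ_{i=0}^∞ bⁱ/(i+m+1), and θ_m(b) is the smallest such a (i.e., for any a < θ_m(b) the inequality fails for some x with |x| ≤ b). -/
/-!
For `|x| < 1` the Taylor remainder `-log (1 - x) - ∑_{k=1}^m x^k/k` is the series
`∑ x^(i+m+1)/(i+m+1)`, which is termwise at most `|x|^(m+1) · b^i/(i+m+1)` when `|x| ≤ b`;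
summing gives `θ_m(b) |x|^(m+1)`. At `x = b` every term is an equality, so no smaller
constant works.
-/

open Finset

/-- `θ_m(b) = ∑_{i=0}^∞ bⁱ/(i+m+1)`. -/
noncomputable def theta (m : ℕ) (b : ℝ) : ℝ := ∑' i : ℕ, b ^ i / ((i : ℝ) + m + 1)

lemma hasSum_theta (m : ℕ) {b : ℝ} (hb : |b| < 1) :
    HasSum (fun i : ℕ => b ^ i / ((i : ℝ) + m + 1)) (theta m b) := by
  refine (Summable.of_norm_bounded (summable_geometric_of_lt_one (abs_nonneg b) hb)
    fun i => ?_).hasSum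
  rw [norm_div, Real.norm_eq_abs, abs_pow, Real.norm_of_nonneg (by positivity)]
  exact div_le_self (by positivity) (by linarith [i.cast_nonneg (α := ℝ), m.cast_nonneg (α := ℝ)])

lemma sum_Icc_one_eq_sum_range {M : Type*} [AddCommMonoid M] (f : ℕ → M) (m : ℕ) :
    ∑ k ∈ Icc 1 m, f k = ∑ i ∈ range m, f (i + 1) := by
  rw [range_eq_Ico, sum_Ico_add']
  rfl

lemma hasSum_neg_log_one_sub_sub_sum (m : ℕ) {x : ℝ} (hx : |x| < 1) :
    HasSum (fun i : ℕ => x ^ (i + m + 1) / ((i : ℝ) + m + 1))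
      (-Real.log (1 - x) - ∑ k ∈ Icc 1 m, x ^ k / (k : ℝ)) := by
  have h := (hasSum_nat_add_iff' (f := fun n : ℕ => x ^ (n + 1) / ((n : ℝ) + 1)) m).mpr
    (Real.hasSum_pow_div_log_of_abs_lt_one hx)
  simp only [sum_Icc_one_eq_sum_range, Nat.cast_add, Nat.cast_one]
  simpa only [Nat.cast_add] using h

lemma neg_log_one_sub_sub_sum_le_theta_mul (m : ℕ) {x b : ℝ} (hxb : |x| ≤ b) (hb : b < 1) :
    -Real.log (1 - x) - ∑ k ∈ Icc 1 m, x ^ k / (k : ℝ) ≤ theta m b * |x| ^ (m + 1) := by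
  have hb' : |b| < 1 := abs_lt.2 ⟨by linarith [abs_nonneg x], hb⟩
  refine hasSum_le (fun i => ?_) (hasSum_neg_log_one_sub_sub_sum m (hxb.trans_lt hb))
    ((hasSum_theta m hb').mul_right _)
  rw [div_mul_eq_mul_div]
  gcongr
  calc x ^ (i + m + 1) ≤ |x| ^ i * |x| ^ (m + 1) := by
        rw [← pow_add, ← abs_pow, add_assoc]; exact le_abs_self _
    _ ≤ b ^ i * |x| ^ (m + 1) := by gcongr

lemma neg_log_one_sub_sub_sum_eq_theta_mul (m : ℕ) {b : ℝ} (hb0 : 0 ≤ b) (hb1 : b < 1) :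
    -Real.log (1 - b) - ∑ k ∈ Icc 1 m, b ^ k / (k : ℝ) = theta m b * b ^ (m + 1) := by
  have hb : |b| < 1 := by rwa [abs_of_nonneg hb0]
  refine (hasSum_neg_log_one_sub_sub_sum m hb).unique ?_
  simpa only [div_mul_eq_mul_div, ← pow_add, add_assoc] using
    (hasSum_theta m hb).mul_right (b ^ (m + 1))

theorem stmt_0_general (m : ℕ) (b : ℝ) (hb0 : 0 < b) (hb1 : b < 1) :
    (∀ x : ℝ, |x| ≤ b →
      -Real.log (1 - x) ≤ (∑ k ∈ Finset.Icc 1 m, x ^ k / (k : ℝ))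
        + theta m b * |x| ^ (m + 1)) ∧
    (∀ a : ℝ, a < theta m b → ∃ x : ℝ, |x| ≤ b ∧
      (∑ k ∈ Finset.Icc 1 m, x ^ k / (k : ℝ)) + a * |x| ^ (m + 1)
        < -Real.log (1 - x)) := by
  refine ⟨fun x hx => ?_, fun a ha => ⟨b, (abs_of_pos hb0).le, ?_⟩⟩
  · linarith [neg_log_one_sub_sub_sum_le_theta_mul m hx hb1]
  · have h := neg_log_one_sub_sub_sum_eq_theta_mul m hb0.le hb1
    have : a * b ^ (m + 1) < theta m b * b ^ (m + 1) := by gcongr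
    rw [abs_of_pos hb0]
    linarith

theorem stmt_0 (m : ℕ) (hm : 1 ≤ m) (b : ℝ) (hb0 : 0 < b) (hb1 : b < 1) :
    (∀ x : ℝ, |x| ≤ b →
      -Real.log (1 - x) ≤ (∑ k ∈ Finset.Icc 1 m, x ^ k / (k : ℝ))
        + theta m b * |x| ^ (m + 1)) ∧
    (∀ a : ℝ, a < theta m b → ∃ x : ℝ, |x| ≤ b ∧
      (∑ k ∈ Finset.Icc 1 m, x ^ k / (k : ℝ)) + a * |x| ^ (m + 1)
        < -Real.log (1 - x)) :=
  stmt_0_general m b hb0 hb1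
end

section
/- For every integer m ≥ 1 and every real a with a ≤ 1/(m+1), there is no b > 0 such that -ln(1-x) ≤ x + x²/2 + ... + xᵐ/m + a·|x|^(m+1) holds for all x with |x| ≤ b. -/
/-! For `0 < x < 1` every partial sum of `-log (1 - x) = ∑ xᵏ / k` falls strictly short of the
full sum, since all terms are positive. With `a ≤ 1 / (m + 1)` the right-hand side of the inequality
is at most the partial sum up to `k = m + 1`, so the inequality fails at `x = min b (1/2)`. -/

open Finset Real

lemma Finset.sum_Icc_one_eq_sum_range_succ {M : Type*} [AddCommMonoid M] (f : ℕ → M) (n : ℕ) :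
    ∑ k ∈ Icc 1 n, f k = ∑ i ∈ range n, f (i + 1) := by
  rw [range_eq_Ico, sum_Ico_add', zero_add, Ico_add_one_right_eq_Icc]

lemma Real.sum_Icc_pow_div_lt_neg_log_one_sub {x : ℝ} (hx0 : 0 < x) (hx1 : x < 1) (n : ℕ) :
    ∑ k ∈ Icc 1 n, x ^ k / k < -log (1 - x) := by
  have hsum := hasSum_pow_div_log_of_abs_lt_one (abs_lt.2 ⟨by linarith, hx1⟩)
  rw [sum_Icc_one_eq_sum_range_succ]
  push_cast
  calc ∑ i ∈ range n, x ^ (i + 1) / (i + 1)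
      < ∑ i ∈ range (n + 1), x ^ (i + 1) / (i + 1) := by
        rw [sum_range_succ]
        exact lt_add_of_pos_right _ (by positivity)
    _ ≤ -log (1 - x) := sum_le_hasSum _ (fun i _ ↦ by positivity) hsum

theorem stmt_1_general (m : ℕ) (a : ℝ) (ha : a ≤ 1 / ((m : ℝ) + 1)) :
    ¬ ∃ b : ℝ, 0 < b ∧ ∀ x : ℝ, |x| ≤ b →
      -Real.log (1 - x) ≤ (∑ k ∈ Finset.Icc 1 m, x ^ k / (k : ℝ))
        + a * |x| ^ (m + 1) := by
  rintro ⟨b, hb, hbound⟩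
  set x := min b (1 / 2)
  have hx0 : 0 < x := lt_min hb one_half_pos
  have hx1 : x < 1 := (min_le_right _ _).trans_lt one_half_lt_one
  have hineq := hbound x (by rw [abs_of_pos hx0]; exact min_le_left _ _)
  rw [abs_of_pos hx0] at hineq
  have hcoef : a * x ^ (m + 1) ≤ x ^ (m + 1) / (m + 1) := by
    rw [div_eq_mul_one_div, mul_comm (x ^ _)]
    exact mul_le_mul_of_nonneg_right ha (by positivity)
  have hpartial := sum_Icc_pow_div_lt_neg_log_one_sub hx0 hx1 (m + 1)
  rw [sum_Icc_succ_top (by omega)] at hpartial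
  push_cast at hpartial
  linarith

theorem stmt_1 (m : ℕ) (hm : 1 ≤ m) (a : ℝ) (ha : a ≤ 1 / ((m : ℝ) + 1)) :
    ¬ ∃ b : ℝ, 0 < b ∧ ∀ x : ℝ, |x| ≤ b →
      -Real.log (1 - x) ≤ (∑ k ∈ Finset.Icc 1 m, x ^ k / (k : ℝ))
        + a * |x| ^ (m + 1) :=
  stmt_1_general m a ha
end

section
/- For every integer m ≥ 1 and every real a with (m+1)/(m+2) < a < 1, the inequality -ln(1-x) ≤ x + x²/2 + ... + xᵐ/m + x^(m+1)/((m+1)(1-ax)) holds for all x with 0 ≤ x ≤ b, where b = (m+1-(m+2)a)/(a(m-(m+1)a)). -/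
/-!
The gap `F y = ∑_{k ≤ m} y^k/k + log (1 - y) + y^(m+1)/((m+1)(1 - a y))` vanishes at `0`, and
`F' y = y^m ((m + 1 - m a y)/((m + 1)(1 - a y)^2) - 1/(1 - y))`. Its sign is that of
`(m + 1 - m a y)(1 - y) - (m + 1)(1 - a y)^2 = y ((m + 2) a - (m + 1) + y a (m - (m + 1) a))`,
which is nonnegative exactly for `0 ≤ y ≤ b`; so `F` increases on `[0, b]`.
-/

open Finset Real

theorem hasDerivAt_sum_pow_div_add_log_one_sub (m : ℕ) {y : ℝ} (hy : 1 - y ≠ 0) :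
    HasDerivAt (fun z => ∑ k ∈ Icc 1 m, z ^ k / (k : ℝ) + log (1 - z)) (-(y ^ m / (1 - y))) y := by
  induction m with
  | zero =>
    simpa [neg_div] using ((hasDerivAt_id y).const_sub 1).log hy
  | succ m ih =>
    have hpow : HasDerivAt (fun z : ℝ => z ^ (m + 1) / ((m + 1 : ℕ) : ℝ)) (y ^ m) y :=
      ((hasDerivAt_pow (m + 1) y).div_const _).congr_deriv (by field_simp; simp)
    have hsum : (fun z => ∑ k ∈ Icc 1 (m + 1), z ^ k / (k : ℝ) + log (1 - z)) =
        fun z => (∑ k ∈ Icc 1 m, z ^ k / (k : ℝ) + log (1 - z)) + z ^ (m + 1) / ((m + 1 : ℕ) : ℝ) := by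
      ext z
      rw [sum_Icc_succ_top (by omega)]
      ring
    rw [hsum]
    exact (ih.add hpow).congr_deriv (by field_simp; ring)

theorem hasDerivAt_pow_succ_div_one_sub_mul (m : ℕ) (a : ℝ) {y : ℝ} (hy : 1 - a * y ≠ 0) :
    HasDerivAt (fun z => z ^ (m + 1) / (((m : ℝ) + 1) * (1 - a * z)))
      (y ^ m * ((m : ℝ) + 1 - m * a * y) / (((m : ℝ) + 1) * (1 - a * y) ^ 2)) y := by
  have hden : HasDerivAt (fun z => ((m : ℝ) + 1) * (1 - a * z)) (((m : ℝ) + 1) * (-a)) y := by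
    simpa using (((hasDerivAt_id y).const_mul a).const_sub 1).const_mul ((m : ℝ) + 1)
  refine ((hasDerivAt_pow (m + 1) y).div hden (mul_ne_zero (by positivity) hy)).congr_deriv ?_
  push_cast
  field_simp
  ring

theorem sq_one_sub_mul_le_of_nonneg {M a y : ℝ} (hy : 0 ≤ y)
    (h : 0 ≤ (M + 2) * a - (M + 1) + y * (a * (M - (M + 1) * a))) :
    (M + 1) * (1 - a * y) ^ 2 ≤ (M + 1 - M * a * y) * (1 - y) := by
  nlinarith [mul_nonneg hy h]

theorem pow_div_one_sub_le_of_sq_le {M a y : ℝ} (m : ℕ) (hM : 0 < M + 1) (hy : 0 ≤ y)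
    (hy1 : 0 < 1 - y) (hay : 0 < 1 - a * y)
    (h : (M + 1) * (1 - a * y) ^ 2 ≤ (M + 1 - M * a * y) * (1 - y)) :
    y ^ m / (1 - y) ≤ y ^ m * (M + 1 - M * a * y) / ((M + 1) * (1 - a * y) ^ 2) := by
  rw [div_le_div_iff₀ hy1 (by positivity), mul_assoc]
  exact mul_le_mul_of_nonneg_left h (pow_nonneg hy m)

noncomputable def logRadius (M a : ℝ) : ℝ := (M + 1 - (M + 2) * a) / (a * (M - (M + 1) * a))

section logRadius

variable {M a : ℝ} (hM : 0 ≤ M) (ha1 : (M + 1) / (M + 2) < a)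
include hM ha1

theorem logRadius_denom_neg : a * (M - (M + 1) * a) < 0 := by
  rw [div_lt_iff₀ (by linarith)] at ha1
  have ha0 : 0 < a := by nlinarith
  exact mul_neg_of_pos_of_neg ha0 (by nlinarith)

theorem sub_add_mul_nonneg_of_le_logRadius {y : ℝ} (hy : y ≤ logRadius M a) :
    0 ≤ (M + 2) * a - (M + 1) + y * (a * (M - (M + 1) * a)) := by
  rw [logRadius, le_div_iff_of_neg (logRadius_denom_neg hM ha1)] at hy
  linarith

/-- Numerator minus denominator of `logRadius M a` is `(M + 1) * (1 - a) ^ 2`. -/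
theorem logRadius_lt_one (ha2 : a < 1) : logRadius M a < 1 := by
  rw [logRadius, div_lt_one_of_neg (logRadius_denom_neg hM ha1)]
  nlinarith [mul_pos (by linarith : 0 < M + 1) (pow_pos (sub_pos.2 ha2) 2)]

end logRadius

noncomputable def logTaylorGap (m : ℕ) (a y : ℝ) : ℝ :=
  ∑ k ∈ Icc 1 m, y ^ k / (k : ℝ) + log (1 - y) + y ^ (m + 1) / (((m : ℝ) + 1) * (1 - a * y))

theorem logTaylorGap_zero (m : ℕ) (a : ℝ) : logTaylorGap m a 0 = 0 := by
  simp only [logTaylorGap, sub_zero, log_one, mul_zero, add_zero, zero_pow m.succ_ne_zero, zero_div]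
  exact sum_eq_zero fun k hk => by rw [zero_pow (by grind), zero_div]

theorem hasDerivAt_logTaylorGap (m : ℕ) (a : ℝ) {y : ℝ} (hy : 1 - y ≠ 0) (hay : 1 - a * y ≠ 0) :
    HasDerivAt (logTaylorGap m a)
      (-(y ^ m / (1 - y)) + y ^ m * ((m : ℝ) + 1 - m * a * y) / (((m : ℝ) + 1) * (1 - a * y) ^ 2))
      y :=
  (hasDerivAt_sum_pow_div_add_log_one_sub m hy).add (hasDerivAt_pow_succ_div_one_sub_mul m a hay)

theorem monotoneOn_logTaylorGap (m : ℕ) {a : ℝ} (ha1 : ((m : ℝ) + 1) / ((m : ℝ) + 2) < a)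
    (ha2 : a < 1) : MonotoneOn (logTaylorGap m a) (Set.Icc 0 (logRadius m a)) := by
  have hM : (0 : ℝ) ≤ m := m.cast_nonneg
  have ha0 : 0 < a := lt_trans (by positivity) ha1
  have hpos : ∀ y ∈ Set.Icc 0 (logRadius m a), 0 < 1 - y ∧ 0 < 1 - a * y := fun y hy => by
    have := logRadius_lt_one hM ha1 ha2
    constructor <;> nlinarith [hy.1, hy.2]
  have hderiv : ∀ y ∈ Set.Icc 0 (logRadius m a), HasDerivAt (logTaylorGap m a)
      (-(y ^ m / (1 - y)) + y ^ m * ((m : ℝ) + 1 - m * a * y) / (((m : ℝ) + 1) * (1 - a * y) ^ 2))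
      y := fun y hy =>
    hasDerivAt_logTaylorGap m a (hpos y hy).1.ne' (hpos y hy).2.ne'
  refine monotoneOn_of_hasDerivWithinAt_nonneg (convex_Icc _ _)
    (fun y hy => (hderiv y hy).continuousAt.continuousWithinAt)
    (fun y hy => (hderiv y (interior_subset hy)).hasDerivWithinAt) (fun y hy => ?_)
  obtain ⟨hy0, hyb⟩ := interior_subset hy
  obtain ⟨hy1, hay⟩ := hpos y (interior_subset hy)
  have := pow_div_one_sub_le_of_sq_le m (by linarith) hy0 hy1 hay
    (sq_one_sub_mul_le_of_nonneg hy0 (sub_add_mul_nonneg_of_le_logRadius hM ha1 hyb))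
  linarith

theorem stmt_2_general (m : ℕ) (a : ℝ)
    (ha1 : ((m : ℝ) + 1) / ((m : ℝ) + 2) < a) (ha2 : a < 1) :
    ∀ x : ℝ, 0 ≤ x →
      x ≤ ((m : ℝ) + 1 - ((m : ℝ) + 2) * a) / (a * ((m : ℝ) - ((m : ℝ) + 1) * a)) →
      -Real.log (1 - x) ≤ (∑ k ∈ Finset.Icc 1 m, x ^ k / (k : ℝ))
        + x ^ (m + 1) / (((m : ℝ) + 1) * (1 - a * x)) := by
  intro x hx0 hxb
  have h := monotoneOn_logTaylorGap m ha1 ha2 ⟨le_rfl, hx0.trans hxb⟩ ⟨hx0, hxb⟩ hx0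
  rw [logTaylorGap_zero, logTaylorGap] at h
  linarith

theorem stmt_2 (m : ℕ) (hm : 1 ≤ m) (a : ℝ)
    (ha1 : ((m : ℝ) + 1) / ((m : ℝ) + 2) < a) (ha2 : a < 1) :
    ∀ x : ℝ, 0 ≤ x →
      x ≤ ((m : ℝ) + 1 - ((m : ℝ) + 2) * a) / (a * ((m : ℝ) - ((m : ℝ) + 1) * a)) →
      -Real.log (1 - x) ≤ (∑ k ∈ Finset.Icc 1 m, x ^ k / (k : ℝ))
        + x ^ (m + 1) / (((m : ℝ) + 1) * (1 - a * x)) :=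
  stmt_2_general m a ha1 ha2
end

section
/- For every real a with 2/3 < a ≤ 1, the inequality -ln(1-x) ≤ x + x²/(2(1-ax)) holds for all x with 0 ≤ x ≤ b, where b = (3a-2)/(a(2a-1)). -/
/-!
The gap `g(y) = y + y² / (2(1 - a y)) + log(1 - y)` vanishes at `0`, and its derivative is
`y² ((3a - 2) - a(2a - 1) y) / (2 (1 - a y)² (1 - y))`, which is nonnegative exactly up to
`y = b`. So `g` is nondecreasing on `[0, b]`, hence nonnegative there.
-/

open Real Set

noncomputable def logBoundGap (a y : ℝ) : ℝ :=
  y + y ^ 2 / (2 * (1 - a * y)) + log (1 - y)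

theorem logBoundGap_zero (a : ℝ) : logBoundGap a 0 = 0 := by
  simp [logBoundGap]

theorem hasDerivAt_logBoundGap (a : ℝ) {y : ℝ} (hy : 1 - y ≠ 0) (hay : 1 - a * y ≠ 0) :
    HasDerivAt (logBoundGap a)
      (y ^ 2 * ((3 * a - 2) - a * (2 * a - 1) * y) / (2 * (1 - a * y) ^ 2 * (1 - y))) y := by
  have hden : HasDerivAt (fun y : ℝ => 2 * (1 - a * y)) (-(2 * a)) y := by
    simpa using (((hasDerivAt_id y).const_mul a).const_sub 1).const_mul 2
  have hlog : HasDerivAt (fun y : ℝ => log (1 - y)) (-1 / (1 - y)) y := by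
    simpa using ((hasDerivAt_id y).const_sub 1).log hy
  refine (((hasDerivAt_id y).add ((hasDerivAt_pow 2 y).div hden (by simpa))).add hlog).congr_deriv ?_
  rw [mul_comm a y] at hay ⊢
  field_simp
  ring

theorem logBoundGap_monotoneOn {a x : ℝ} (ha : a ≤ 1) (hc : 0 ≤ a * (2 * a - 1)) (hx : x < 1)
    (hxb : a * (2 * a - 1) * x ≤ 3 * a - 2) : MonotoneOn (logBoundGap a) (Icc 0 x) := by
  have hpos : ∀ y ∈ Icc 0 x, 0 < 1 - y ∧ 0 < 1 - a * y := fun y ⟨hy0, hyx⟩ =>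
    ⟨by linarith, by nlinarith⟩
  have hderiv : ∀ y ∈ Icc 0 x, HasDerivAt (logBoundGap a)
      (y ^ 2 * ((3 * a - 2) - a * (2 * a - 1) * y) / (2 * (1 - a * y) ^ 2 * (1 - y))) y :=
    fun y hy => hasDerivAt_logBoundGap a (hpos y hy).1.ne' (hpos y hy).2.ne'
  refine monotoneOn_of_hasDerivWithinAt_nonneg (convex_Icc 0 x)
    (fun y hy => (hderiv y hy).continuousAt.continuousWithinAt)
    (fun y hy => (hderiv y (Ioo_subset_Icc_self (by rwa [interior_Icc] at hy))).hasDerivWithinAt)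
    fun y hy => ?_
  rw [interior_Icc] at hy
  obtain ⟨h1, h2⟩ := hpos y (Ioo_subset_Icc_self hy)
  have hnum : 0 ≤ (3 * a - 2) - a * (2 * a - 1) * y := by
    nlinarith [mul_le_mul_of_nonneg_left hy.2.le hc]
  positivity

theorem neg_log_one_sub_le {a x : ℝ} (ha : a ≤ 1) (hc : 0 ≤ a * (2 * a - 1)) (hx0 : 0 ≤ x)
    (hx1 : x < 1) (hxb : a * (2 * a - 1) * x ≤ 3 * a - 2) :
    -log (1 - x) ≤ x + x ^ 2 / (2 * (1 - a * x)) := by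
  have := logBoundGap_monotoneOn ha hc hx1 hxb (left_mem_Icc.2 hx0) (right_mem_Icc.2 hx0) hx0
  rw [logBoundGap_zero] at this
  unfold logBoundGap at this
  linarith

theorem stmt_3 (a : ℝ) (ha1 : 2 / 3 < a) (ha2 : a ≤ 1) :
    ∀ x : ℝ, 0 ≤ x → x ≤ (3 * a - 2) / (a * (2 * a - 1)) →
      -Real.log (1 - x) ≤ x + x ^ 2 / (2 * (1 - a * x)) := by
  intro x hx0 hxb
  have hc : 0 < a * (2 * a - 1) := by nlinarith
  have hxb' : a * (2 * a - 1) * x ≤ 3 * a - 2 := by rwa [le_div_iff₀' hc] at hxb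
  have hb_le_one : (3 * a - 2) / (a * (2 * a - 1)) ≤ 1 := by
    rw [div_le_one hc]; nlinarith [sq_nonneg (a - 1)]
  rcases (hxb.trans hb_le_one).lt_or_eq with hx1 | rfl
  · exact neg_log_one_sub_le ha2 hc.le hx0 hx1 hxb'
  · -- Only possible for `a = 1`; there `log 0 = 0` and `1 / 0 = 0`, so this reads `0 ≤ 1`.
    have : 0 ≤ (1 - a)⁻¹ := inv_nonneg.2 (sub_nonneg.2 ha2)
    norm_num
    positivity
end

section
/- For a positive-semidefinite matrix A with α = ‖A‖, β = ‖A‖₂², the function ρ ↦ 1/(2a₀ρ) - (1/(2a₀²ρ²))(√(1+2a₀ρ) - 1) for 0 < ρ ≤ 1, and ρ ↦ 1/4 - 1/(16(1 - a₀/2)ρ) for ρ > 1, where a₀ = (7-√17)/4, attains its infimum over ρ > 0 at ρ = 1, and this infimum equals (9-√17)/32. -/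
open scoped Classical

theorem stmt_6 :
    let a₀ : ℝ := (7 - Real.sqrt 17) / 4
    let f : ℝ → ℝ := fun ρ =>
      if ρ ≤ 1 then
        1 / (2 * a₀ * ρ) - 1 / (2 * a₀ ^ 2 * ρ ^ 2) * (Real.sqrt (1 + 2 * a₀ * ρ) - 1)
      else
        1 / 4 - 1 / (16 * (1 - a₀ / 2) * ρ)
    (∀ ρ : ℝ, 0 < ρ → f 1 ≤ f ρ) ∧ f 1 = (9 - Real.sqrt 17) / 32 := by
  intro a₀ f
  have h17 : Real.sqrt 17 ^ 2 = 17 := Real.sq_sqrt (by norm_num)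
  have hs0 : 0 ≤ Real.sqrt 17 := Real.sqrt_nonneg 17
  have h4 : 4 < Real.sqrt 17 := by nlinarith
  have h5 : Real.sqrt 17 < 5 := by nlinarith
  have ha : 0 < a₀ := by simp only [a₀]; nlinarith
  have ha1 : a₀ < 1 := by simp only [a₀]; nlinarith
  have hc : Real.sqrt (1 + 2 * a₀ * 1) = (Real.sqrt 17 - 1) / 2 := by
    rw [show (1 + 2 * a₀ * 1 : ℝ) = ((Real.sqrt 17 - 1) / 2) ^ 2 by
      simp only [a₀]; nlinarith]
    exact Real.sqrt_sq (by nlinarith)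
  have hf1 : f 1 = (9 - Real.sqrt 17) / 32 := by
    simp only [f, if_pos le_rfl, hc]
    simp only [a₀]
    have h7 : (7 : ℝ) - Real.sqrt 17 ≠ 0 := by nlinarith
    field_simp
    nlinarith [h17, h4, h5]
  refine ⟨fun ρ hρ => ?_, hf1⟩
  rw [hf1]
  by_cases hle : ρ ≤ 1
  · -- branch ρ ≤ 1
    simp only [f, if_pos hle]
    set u := Real.sqrt (1 + 2 * a₀ * ρ) with hu
    have hpos : (0:ℝ) < 1 + 2 * a₀ * ρ := by nlinarith
    have hu2 : u ^ 2 = 1 + 2 * a₀ * ρ := Real.sq_sqrt (le_of_lt hpos)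
    have hu1 : 1 < u := by
      nlinarith [Real.sqrt_nonneg (1 + 2 * a₀ * ρ)]
    have hule : u ≤ (Real.sqrt 17 - 1) / 2 := by
      rw [hu, ← hc]
      exact Real.sqrt_le_sqrt (by nlinarith)
    have hρeq : ρ = (u ^ 2 - 1) / (2 * a₀) := by
      field_simp
      linarith [hu2]
    have key : 1 / (2 * a₀ * ρ) - 1 / (2 * a₀ ^ 2 * ρ ^ 2) * (u - 1)
        = 1 / (u + 1) ^ 2 := by
      rw [hρeq]
      have h1 : u ^ 2 - 1 ≠ 0 := by nlinarith
      have h2 : u + 1 ≠ 0 := by nlinarith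
      have h3 : u - 1 ≠ 0 := by nlinarith
      field_simp
      ring
    rw [key]
    rw [div_le_div_iff₀ (by norm_num) (by positivity)]
    nlinarith [sq_nonneg (u - (Real.sqrt 17 - 1) / 2)]
  · -- branch ρ > 1
    push_neg at hle
    simp only [f, if_neg (not_le.mpr hle)]
    have hpos : 0 < 16 * (1 - a₀ / 2) * ρ := by
      have : 0 < 1 - a₀ / 2 := by linarith
      positivity
    have heq : (Real.sqrt 17 - 1) / 32 * (16 * (1 - a₀ / 2) * ρ) = ρ := by
      simp only [a₀]
      linear_combination (ρ / 16) * h17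
    have key : 1 / (16 * (1 - a₀ / 2) * ρ) ≤ (Real.sqrt 17 - 1) / 32 := by
      rw [div_le_iff₀ hpos, heq]
      linarith
    linarith
end

section
/- The function g(ρ) = ((√(1+2ρ) - 1)/(2ρ))² for 0 < ρ ≤ 1 and g(ρ) = (√(1+2ρ) - 1)²/(4ρ) for ρ > 1 attains its absolute minimum over ρ > 0 at ρ = 1, with minimum value 1 - √3/2. -/
open scoped Classical

theorem stmt_7 :
    let g : ℝ → ℝ := fun ρ =>
      if ρ ≤ 1 then ((Real.sqrt (1 + 2 * ρ) - 1) / (2 * ρ)) ^ 2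
      else (Real.sqrt (1 + 2 * ρ) - 1) ^ 2 / (4 * ρ)
    (∀ ρ : ℝ, 0 < ρ → g 1 ≤ g ρ) ∧ g 1 = 1 - Real.sqrt 3 / 2 := by
  intro g
  have h3 : Real.sqrt 3 ^ 2 = 3 := Real.sq_sqrt (by norm_num)
  have h3pos : (1:ℝ) ≤ Real.sqrt 3 := by nlinarith [Real.sqrt_nonneg 3]
  have hg1 : g 1 = ((Real.sqrt 3 - 1) / 2) ^ 2 := by
    simp only [g]
    norm_num
  constructor
  · intro ρ hρ
    have hs := Real.sqrt_nonneg (1 + 2*ρ)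
    have hsq : Real.sqrt (1+2*ρ) ^ 2 = 1 + 2*ρ := Real.sq_sqrt (by linarith)
    set s := Real.sqrt (1+2*ρ) with hsdef
    rw [hg1]
    simp only [g]
    split_ifs with h
    · have hsle : s ≤ Real.sqrt 3 := Real.sqrt_le_sqrt (by linarith)
      have hs1 : 0 < s + 1 := by linarith
      have heq : (s-1)/(2*ρ) = 1/(s+1) := by
        rw [div_eq_div_iff (by positivity) hs1.ne']
        nlinarith
      rw [heq, div_pow, div_pow, div_le_div_iff₀ (by positivity) (by positivity)]
      nlinarith
    · push_neg at h
      have hsge : Real.sqrt 3 ≤ s := Real.sqrt_le_sqrt (by linarith)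
      rw [le_div_iff₀ (by positivity)]
      nlinarith [mul_nonneg (sub_nonneg.2 hsge) (by linarith : (0:ℝ) ≤ s - 1)]
  · have : g 1 = ((Real.sqrt 3 - 1) / 2) ^ 2 := hg1
    rw [this]
    nlinarith
end

section
/- Let A be an n×n real symmetric matrix, x a standard Gaussian vector, Δ = xᵀAx - Tr(A). Then for every t > 0, P(Δ > t) ≤ (1 + t/(n‖A‖))^(n/2) · exp(-t/(2‖A‖)), and the right-hand side is strictly less than 1. -/
/-!
Diagonalise `A = V diag(λ) Vᵀ`. The standard Gaussian measure on `ℝⁿ` is invariant under the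
orthogonal map `x ↦ Vᵀ x`, so `Δ` has the law of `∑ λₖ (yₖ² - 1)` with `y` standard Gaussian.
Each summand has moment generating function `((1 - 2sλ) e^{2sλ})^{-1/2}`, and since
`a ↦ (1 - a) eᵃ` is smallest at `a = b` on `|a| ≤ b`, every factor is at most the one with
`λ = ‖A‖`. The Chernoff bound at `s = t / (2‖A‖ (n‖A‖ + t))` is exactly the `m_∞`-bound, which
is `< 1` because `1 + u < eᵘ`.
-/

open MeasureTheory ProbabilityTheory Real WithLp Matrix

lemma one_sub_mul_exp_le_of_le {a b : ℝ} (ha : 0 ≤ a) (hab : a ≤ b) :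
    (1 - b) * exp b ≤ (1 - a) * exp a := by
  have hsplit : exp b = exp (b - a) * exp a := by rw [← exp_add]; ring_nf
  have h_one_le : 1 ≤ exp (b - a) := one_le_exp (by linarith)
  have h_le_one : (1 - (b - a)) * exp (b - a) ≤ 1 := by
    simpa [← exp_add] using
      mul_le_mul_of_nonneg_right (one_sub_le_exp_neg (b - a)) (exp_pos (b - a)).le
  have key : (1 - b) * exp (b - a) ≤ 1 - a := by
    nlinarith [mul_nonneg ha (sub_nonneg.2 h_one_le)]
  rw [hsplit, ← mul_assoc]
  exact mul_le_mul_of_nonneg_right key (exp_pos a).le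

lemma one_sub_mul_exp_two_mul_le {c : ℝ} (hc : 0 ≤ c) : (1 - c) * exp (2 * c) ≤ 1 + c := by
  rcases le_or_gt 1 c with h1 | h1
  · nlinarith [exp_pos (2 * c)]
  have habs : |c| < 1 := by rw [abs_of_nonneg hc]; exact h1
  -- `2 * c` is the first term of the series of `log (1 + c) - log (1 - c) = 2 * artanh c`.
  have hlog : 2 * c ≤ log (1 + c) - log (1 - c) := by
    simpa using le_hasSum (hasSum_log_sub_log_of_abs_lt_one habs) 0
      fun k _ => by positivity
  rw [← log_div (by linarith) (by linarith), le_log_iff_exp_le (by positivity)] at hlog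
  rwa [le_div_iff₀ (by linarith), mul_comm] at hlog

lemma one_sub_mul_exp_le_of_abs_le {a b : ℝ} (hab : |a| ≤ b) :
    (1 - b) * exp b ≤ (1 - a) * exp a := by
  rcases le_or_gt 0 a with ha | ha
  · exact one_sub_mul_exp_le_of_le ha (le_of_abs_le hab)
  have hc : 0 ≤ -a := by linarith
  calc (1 - b) * exp b ≤ (1 - -a) * exp (-a) :=
        one_sub_mul_exp_le_of_le hc (by rw [abs_of_neg ha] at hab; exact hab)
    _ ≤ (1 - a) * exp a := by
        have h := one_sub_mul_exp_two_mul_le hc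
        have hsplit : exp (2 * -a) = exp (-a) * exp (-a) := by rw [← exp_add]; ring_nf
        have hinv : exp (-a) * exp a = 1 := by rw [← exp_add]; simp
        nlinarith [exp_pos a, exp_pos (-a)]

lemma gaussianPDFReal_zero_one_mul_exp_mul_sq (c u : ℝ) :
    gaussianPDFReal 0 1 u * exp (c * u ^ 2) = (√(2 * π))⁻¹ * exp (-(1 / 2 - c) * u ^ 2) := by
  rw [gaussianPDFReal, NNReal.coe_one, mul_one, mul_assoc, ← exp_add]
  congr 2
  ring

lemma integrable_exp_mul_sq_gaussianReal {c : ℝ} (hc : c < 1 / 2) :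
    Integrable (fun u => exp (c * u ^ 2)) (gaussianReal 0 1) := by
  rw [gaussianReal_of_var_ne_zero 0 one_ne_zero,
    integrable_withDensity_iff_integrable_smul' (measurable_gaussianPDF 0 1)
      (ae_of_all _ fun _ => gaussianPDF_lt_top)]
  simp only [gaussianPDF, ENNReal.toReal_ofReal (gaussianPDFReal_nonneg 0 1 _), smul_eq_mul,
    gaussianPDFReal_zero_one_mul_exp_mul_sq]
  exact (integrable_exp_neg_mul_sq (by linarith)).const_mul _

lemma integral_exp_mul_sq_gaussianReal {c : ℝ} (hc : c < 1 / 2) :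
    ∫ u, exp (c * u ^ 2) ∂gaussianReal 0 1 = (1 - 2 * c) ^ (-(1 / 2) : ℝ) := by
  simp only [integral_gaussianReal_eq_integral_smul one_ne_zero, smul_eq_mul,
    gaussianPDFReal_zero_one_mul_exp_mul_sq, integral_const_mul, integral_gaussian]
  rw [← sqrt_inv, ← sqrt_mul (by positivity), rpow_neg (by linarith), ← sqrt_eq_rpow, ← sqrt_inv]
  congr 1
  field_simp

lemma integrable_exp_mul_sq_sub_one_gaussianReal {c : ℝ} (hc : c < 1 / 2) :
    Integrable (fun u => exp (c * (u ^ 2 - 1))) (gaussianReal 0 1) := by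
  simp_rw [mul_sub, mul_one, sub_eq_add_neg, exp_add]
  exact (integrable_exp_mul_sq_gaussianReal hc).mul_const _

lemma integral_exp_mul_sq_sub_one_gaussianReal {c : ℝ} (hc : c < 1 / 2) :
    ∫ u, exp (c * (u ^ 2 - 1)) ∂gaussianReal 0 1 =
      ((1 - 2 * c) * exp (2 * c)) ^ (-(1 / 2) : ℝ) := by
  simp_rw [mul_sub, mul_one, sub_eq_add_neg, exp_add]
  rw [integral_mul_const, integral_exp_mul_sq_gaussianReal hc,
    mul_rpow (by linarith) (exp_pos _).le, ← exp_mul]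
  ring_nf

section GaussianSum

variable {ι : Type*} [Fintype ι]

lemma mgf_sum_mul_sq_sub_one_pi_gaussianReal (l : ι → ℝ) {s : ℝ} (h : ∀ k, s * l k < 1 / 2) :
    Integrable (fun y => exp (s * ∑ k, l k * (y k ^ 2 - 1)))
      (Measure.pi fun _ : ι => gaussianReal 0 1) ∧
    mgf (fun y => ∑ k, l k * (y k ^ 2 - 1)) (Measure.pi fun _ : ι => gaussianReal 0 1) s =
      ∏ k, ((1 - 2 * (s * l k)) * exp (2 * (s * l k))) ^ (-(1 / 2) : ℝ) := by
  have hprod : ∀ y : ι → ℝ, exp (s * ∑ k, l k * (y k ^ 2 - 1)) =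
      ∏ k, exp (s * l k * (y k ^ 2 - 1)) := fun y => by
    rw [Finset.mul_sum, exp_sum]; simp_rw [mul_assoc]
  simp_rw [mgf, hprod]
  refine ⟨Integrable.fintype_prod fun k => integrable_exp_mul_sq_sub_one_gaussianReal (h k), ?_⟩
  rw [integral_fintype_prod_eq_prod (fun k u => exp (s * l k * (u ^ 2 - 1)))]
  exact Finset.prod_congr rfl fun k _ => integral_exp_mul_sq_sub_one_gaussianReal (h k)

lemma measureReal_sum_mul_sq_sub_one_ge_le_exp_mul {l : ι → ℝ} {α s : ℝ} (hl : ∀ k, |l k| ≤ α)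
    (hs : 0 ≤ s) (hsα : 2 * s * α < 1) (t : ℝ) :
    (Measure.pi fun _ : ι => gaussianReal 0 1).real {y | t ≤ ∑ k, l k * (y k ^ 2 - 1)} ≤
      exp (-s * t) * ((1 - 2 * s * α) * exp (2 * s * α)) ^ (-(Fintype.card ι / 2 : ℝ)) := by
  have hsl : ∀ k, |2 * (s * l k)| ≤ 2 * s * α := fun k => by
    rw [abs_mul, abs_mul, abs_two, abs_of_nonneg hs, ← mul_assoc]
    exact mul_le_mul_of_nonneg_left (hl k) (by positivity)
  obtain ⟨hint, hmgf⟩ := mgf_sum_mul_sq_sub_one_pi_gaussianReal l (s := s)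
    fun k => by linarith [le_of_abs_le (hsl k)]
  have hψ : 0 < (1 - 2 * s * α) * exp (2 * s * α) := by
    have := exp_pos (2 * s * α); nlinarith
  calc _ ≤ exp (-s * t) * mgf (fun y => ∑ k, l k * (y k ^ 2 - 1))
        (Measure.pi fun _ : ι => gaussianReal 0 1) s := measure_ge_le_exp_mul_mgf t hs hint
    _ ≤ exp (-s * t) * ∏ _k : ι, ((1 - 2 * s * α) * exp (2 * s * α)) ^ (-(1 / 2) : ℝ) := by
        rw [hmgf]
        gcongr exp (-s * t) * ?_
        refine Finset.prod_le_prod (fun k _ => (rpow_pos_of_pos ?_ _).le) fun k _ =>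
          rpow_le_rpow_of_nonpos hψ (one_sub_mul_exp_le_of_abs_le (hsl k)) (by norm_num)
        exact hψ.trans_le (one_sub_mul_exp_le_of_abs_le (hsl k))
    _ = _ := by
        rw [Finset.prod_const, Finset.card_univ, ← rpow_natCast, ← rpow_mul hψ.le]
        ring_nf

noncomputable def mInftyBound (n α t : ℝ) : ℝ := (1 + t / (n * α)) ^ (n / 2) * exp (-t / (2 * α))

lemma mInftyBound_lt_one {n α t : ℝ} (hn : 0 < n) (hα : 0 < α) (ht : 0 < t) :
    mInftyBound n α t < 1 := by
  have hu : 0 < t / (n * α) := by positivity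
  calc mInftyBound n α t < exp (t / (n * α)) ^ (n / 2) * exp (-t / (2 * α)) := by
        unfold mInftyBound
        gcongr
        linarith [add_one_lt_exp hu.ne']
    _ = 1 := by
        rw [← exp_mul, ← exp_add, exp_eq_one_iff]
        field_simp
        ring

lemma measureReal_sum_mul_sq_sub_one_ge_le_mInftyBound [Nonempty ι] {l : ι → ℝ} {α t : ℝ}
    (hl : ∀ k, |l k| ≤ α) (hα : 0 < α) (ht : 0 < t) :
    (Measure.pi fun _ : ι => gaussianReal 0 1).real {y | t ≤ ∑ k, l k * (y k ^ 2 - 1)} ≤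
      mInftyBound (Fintype.card ι) α t := by
  set N : ℝ := (Fintype.card ι : ℝ)
  have hN : 0 < N := Nat.cast_pos.2 Fintype.card_pos
  set s := t / (2 * α * (N * α + t))
  have hsα : 2 * s * α = t / (N * α + t) := by simp only [s]; field_simp
  have hsα_lt : 2 * s * α < 1 := by
    rw [hsα, div_lt_one (by positivity)]; nlinarith
  have hsub : 1 - 2 * s * α = (1 + t / (N * α))⁻¹ := by
    rw [hsα]; field_simp; ring
  refine (measureReal_sum_mul_sq_sub_one_ge_le_exp_mul hl (by positivity) hsα_lt t).trans_eq ?_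
  have hu : 0 ≤ 1 + t / (N * α) := by positivity
  rw [mInftyBound, mul_rpow (by rw [hsub]; positivity) (exp_pos _).le, hsub, inv_rpow hu,
    rpow_neg hu, inv_inv, ← exp_mul, mul_left_comm, ← exp_add, hsα]
  congr 2
  simp only [s, N]
  field_simp
  ring

variable [DecidableEq ι] in
lemma Matrix.IsHermitian.quadForm_sum_smul_eigenvectorBasis {A : Matrix ι ι ℝ}
    (hA : A.IsHermitian) (y : ι → ℝ) :
    ∑ i, ∑ j, (∑ k, y k • hA.eigenvectorBasis k) i * A i j * (∑ k, y k • hA.eigenvectorBasis k) j =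
      ∑ k, hA.eigenvalues k * y k ^ 2 := by
  set x : ι → ℝ := ofLp (∑ k, y k • hA.eigenvectorBasis k)
  have hcoord : ∀ k, x ⬝ᵥ ofLp (hA.eigenvectorBasis k) = y k := by
    intro k
    have h : inner ℝ (hA.eigenvectorBasis k) (∑ j, y j • hA.eigenvectorBasis j) = y k := by
      simp [inner_sum, real_inner_smul_right, OrthonormalBasis.inner_eq_ite]
    rw [← h, EuclideanSpace.inner_eq_star_dotProduct, star_trivial]
  have hAx : A *ᵥ x = ∑ k, (y k * hA.eigenvalues k) • ofLp (hA.eigenvectorBasis k) := by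
    simp [x, mulVec_sum, mulVec_smul, hA.mulVec_eigenvectorBasis, smul_smul]
  calc ∑ i, ∑ j, x i * A i j * x j = x ⬝ᵥ (A *ᵥ x) := by
        simp [dotProduct, mulVec, Finset.mul_sum, mul_assoc]
    _ = ∑ k, hA.eigenvalues k * y k ^ 2 := by
        simp only [hAx, dotProduct_sum, dotProduct_smul, hcoord, smul_eq_mul]
        exact Finset.sum_congr rfl fun k _ => by ring

variable [DecidableEq ι] in
lemma Matrix.IsHermitian.map_quadForm_sub_trace_pi_gaussianReal {A : Matrix ι ι ℝ}
    (hA : A.IsHermitian) :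
    (Measure.pi fun _ : ι => gaussianReal 0 1).map
        (fun x => ∑ i, ∑ j, x i * A i j * x j - A.trace) =
      (Measure.pi fun _ : ι => gaussianReal 0 1).map
        (fun y => ∑ k, hA.eigenvalues k * (y k ^ 2 - 1)) := by
  set F : EuclideanSpace ℝ ι → ℝ := fun v => ∑ i, ∑ j, v i * A i j * v j - A.trace
  have hF : Measurable F := by fun_prop
  calc (Measure.pi fun _ : ι => gaussianReal 0 1).map (F ∘ toLp 2)
      = ((Measure.pi fun _ : ι => gaussianReal 0 1).map (toLp 2)).map F :=
        (Measure.map_map hF (by fun_prop)).symm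
    _ = ((Measure.pi fun _ : ι => gaussianReal 0 1).map
          (fun y => ∑ k, y k • hA.eigenvectorBasis k)).map F := by
        rw [map_pi_eq_stdGaussian, stdGaussian_eq_map_pi_orthonormalBasis hA.eigenvectorBasis]
    _ = _ := by
        rw [Measure.map_map hF (by fun_prop)]
        congr 1
        funext y
        simp only [Function.comp_apply, F]
        rw [hA.quadForm_sum_smul_eigenvectorBasis y, hA.trace_eq_sum_eigenvalues]
        simp only [RCLike.ofReal_real_eq_id, id, ← Finset.sum_sub_distrib]
        exact Finset.sum_congr rfl fun k _ => by ring

end GaussianSum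

theorem stmt_9 (n : ℕ) (hn : 0 < n) (A : Matrix (Fin n) (Fin n) ℝ)
    (hA : A.IsHermitian) (hα : 0 < ⨆ i, |hA.eigenvalues i|) (t : ℝ) (ht : 0 < t) :
    (Measure.pi fun _ : Fin n => gaussianReal 0 1)
        {x | t < (∑ i, ∑ j, x i * A i j * x j) - A.trace} ≤
      ENNReal.ofReal ((1 + t / (n * ⨆ i, |hA.eigenvalues i|)) ^ ((n : ℝ) / 2) *
        Real.exp (-t / (2 * ⨆ i, |hA.eigenvalues i|))) ∧
    (1 + t / (n * ⨆ i, |hA.eigenvalues i|)) ^ ((n : ℝ) / 2) *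
        Real.exp (-t / (2 * ⨆ i, |hA.eigenvalues i|)) < 1 := by
  set α := ⨆ i, |hA.eigenvalues i|
  have : Nonempty (Fin n) := Fin.pos_iff_nonempty.mp hn
  have hl : ∀ i, |hA.eigenvalues i| ≤ α := le_ciSup (Set.finite_range _).bddAbove
  refine ⟨?_, mInftyBound_lt_one (Nat.cast_pos.2 hn) hα ht⟩
  set μ := Measure.pi fun _ : Fin n => gaussianReal 0 1
  have hlaw : μ {x | t ≤ ∑ i, ∑ j, x i * A i j * x j - A.trace} =
      μ {y | t ≤ ∑ k, hA.eigenvalues k * (y k ^ 2 - 1)} := by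
    have h := congrArg (· (Set.Ici t)) hA.map_quadForm_sub_trace_pi_gaussianReal
    rwa [Measure.map_apply (by fun_prop) measurableSet_Ici,
      Measure.map_apply (by fun_prop) measurableSet_Ici] at h
  have hbound := measureReal_sum_mul_sq_sub_one_ge_le_mInftyBound hl hα ht
  rw [Fintype.card_fin] at hbound
  calc μ {x | t < ∑ i, ∑ j, x i * A i j * x j - A.trace}
      ≤ μ {x | t ≤ ∑ i, ∑ j, x i * A i j * x j - A.trace} :=
        measure_mono (Set.ofPred_subset_ofPred.2 fun _ => le_of_lt)
    _ = ENNReal.ofReal (μ.real {y | t ≤ ∑ k, hA.eigenvalues k * (y k ^ 2 - 1)}) := by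
        rw [hlaw, ofReal_measureReal]
    _ ≤ _ := ENNReal.ofReal_le_ofReal hbound
end

section
/- Let u, v, w, w' be positive reals with w ≥ w', and set x = (√(v² + 3uw) - v)/(3w). Then -ux + vx² + wx³ ≤ (1/(27·w^(1/2)·w'^(3/2)))·(√(v² + 3uw') - v)·(v·√(v² + 3uw') - v² - 6uw'). -/
theorem key_poly (v t t' : ℝ) (hv : 0 < v) (h1 : v ≤ t') (h2 : t' ≤ t) :
    (t' - v) * (2 * t' + v) ^ 2 * (t + v) ^ 3 ≤
      (t - v) * (2 * t + v) ^ 2 * (t' + v) ^ 3 := by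
  have ha : 0 ≤ t - t' := by linarith
  have hb : 0 ≤ t' - v := by linarith
  have hid : (t - v) * (2 * t + v) ^ 2 * (t' + v) ^ 3 -
      (t' - v) * (2 * t' + v) ^ 2 * (t + v) ^ 3 =
      72*(t-t')*v^5 + 192*(t-t')*(t'-v)*v^4 + 186*(t-t')*(t'-v)^2*v^3 +
      78*(t-t')*(t'-v)^3*v^2 + 12*(t-t')*(t'-v)^4*v + 96*(t-t')^2*v^4 +
      186*(t-t')^2*(t'-v)*v^3 + 117*(t-t')^2*(t'-v)^2*v^2 +
      24*(t-t')^2*(t'-v)^3*v + 32*(t-t')^3*v^3 + 39*(t-t')^3*(t'-v)*v^2 +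
      12*(t-t')^3*(t'-v)^2*v := by ring
  have T0 : (0:ℝ) ≤ 72*(t-t')*v^5 := mul_nonneg (mul_nonneg (by norm_num : (0:ℝ) ≤ 72) ha) (pow_nonneg hv.le 5)
  have T1 : (0:ℝ) ≤ 192*(t-t')*(t'-v)*v^4 := mul_nonneg (mul_nonneg (mul_nonneg (by norm_num : (0:ℝ) ≤ 192) ha) hb) (pow_nonneg hv.le 4)
  have T2 : (0:ℝ) ≤ 186*(t-t')*(t'-v)^2*v^3 := mul_nonneg (mul_nonneg (mul_nonneg (by norm_num : (0:ℝ) ≤ 186) ha) (pow_nonneg hb 2)) (pow_nonneg hv.le 3)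
  have T3 : (0:ℝ) ≤ 78*(t-t')*(t'-v)^3*v^2 := mul_nonneg (mul_nonneg (mul_nonneg (by norm_num : (0:ℝ) ≤ 78) ha) (pow_nonneg hb 3)) (pow_nonneg hv.le 2)
  have T4 : (0:ℝ) ≤ 12*(t-t')*(t'-v)^4*v := mul_nonneg (mul_nonneg (mul_nonneg (by norm_num : (0:ℝ) ≤ 12) ha) (pow_nonneg hb 4)) hv.le
  have T5 : (0:ℝ) ≤ 96*(t-t')^2*v^4 := mul_nonneg (mul_nonneg (by norm_num : (0:ℝ) ≤ 96) (pow_nonneg ha 2)) (pow_nonneg hv.le 4)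
  have T6 : (0:ℝ) ≤ 186*(t-t')^2*(t'-v)*v^3 := mul_nonneg (mul_nonneg (mul_nonneg (by norm_num : (0:ℝ) ≤ 186) (pow_nonneg ha 2)) hb) (pow_nonneg hv.le 3)
  have T7 : (0:ℝ) ≤ 117*(t-t')^2*(t'-v)^2*v^2 := mul_nonneg (mul_nonneg (mul_nonneg (by norm_num : (0:ℝ) ≤ 117) (pow_nonneg ha 2)) (pow_nonneg hb 2)) (pow_nonneg hv.le 2)
  have T8 : (0:ℝ) ≤ 24*(t-t')^2*(t'-v)^3*v := mul_nonneg (mul_nonneg (mul_nonneg (by norm_num : (0:ℝ) ≤ 24) (pow_nonneg ha 2)) (pow_nonneg hb 3)) hv.le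
  have T9 : (0:ℝ) ≤ 32*(t-t')^3*v^3 := mul_nonneg (mul_nonneg (by norm_num : (0:ℝ) ≤ 32) (pow_nonneg ha 3)) (pow_nonneg hv.le 3)
  have T10 : (0:ℝ) ≤ 39*(t-t')^3*(t'-v)*v^2 := mul_nonneg (mul_nonneg (mul_nonneg (by norm_num : (0:ℝ) ≤ 39) (pow_nonneg ha 3)) hb) (pow_nonneg hv.le 2)
  have T11 : (0:ℝ) ≤ 12*(t-t')^3*(t'-v)^2*v := mul_nonneg (mul_nonneg (mul_nonneg (by norm_num : (0:ℝ) ≤ 12) (pow_nonneg ha 3)) (pow_nonneg hb 2)) hv.le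
  linarith [hid, T0, T1, T2, T3, T4, T5, T6, T7, T8, T9, T10, T11]

set_option maxHeartbeats 1000000 in
theorem stmt_11 (u v w w' : ℝ) (hu : 0 < u) (hv : 0 < v) (hw' : 0 < w')
    (hww : w' ≤ w) :
    let x : ℝ := (Real.sqrt (v ^ 2 + 3 * u * w) - v) / (3 * w);
    -u * x + v * x ^ 2 + w * x ^ 3 ≤
      1 / (27 * w ^ ((1 : ℝ) / 2) * w' ^ ((3 : ℝ) / 2)) *
        (Real.sqrt (v ^ 2 + 3 * u * w') - v) *
        (v * Real.sqrt (v ^ 2 + 3 * u * w') - v ^ 2 - 6 * u * w') := by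
  intro x
  have hw : 0 < w := lt_of_lt_of_le hw' hww
  set t : ℝ := Real.sqrt (v ^ 2 + 3 * u * w) with htdef
  set t' : ℝ := Real.sqrt (v ^ 2 + 3 * u * w') with htdef'
  have ht2 : t ^ 2 = v ^ 2 + 3 * u * w := Real.sq_sqrt (by positivity)
  have ht2' : t' ^ 2 = v ^ 2 + 3 * u * w' := Real.sq_sqrt (by positivity)
  have ht'nn : 0 ≤ t' := Real.sqrt_nonneg _
  have hvt' : v < t' := by
    have h3 : (0:ℝ) < 3 * u * w' := by positivity
    calc v = Real.sqrt (v ^ 2) := (Real.sqrt_sq hv.le).symm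
      _ < t' := Real.sqrt_lt_sqrt (sq_nonneg v) (by linarith)
  have htt' : t' ≤ t := Real.sqrt_le_sqrt
    (by have := mul_le_mul_of_nonneg_left hww (by positivity : (0:ℝ) ≤ 3 * u); linarith)
  have hvt : v < t := lt_of_lt_of_le hvt' htt'
  set s : ℝ := Real.sqrt w with hsdef
  set s' : ℝ := Real.sqrt w' with hsdef'
  have hs : s ^ 2 = w := Real.sq_sqrt hw.le
  have hs' : s' ^ 2 = w' := Real.sq_sqrt hw'.le
  have hspos : 0 < s := Real.sqrt_pos.mpr hw
  have hs'pos : 0 < s' := Real.sqrt_pos.mpr hw'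
  -- rewrite rpow
  have hrw : w ^ ((1 : ℝ) / 2) = s := (Real.sqrt_eq_rpow w).symm
  have hrw' : w' ^ ((3 : ℝ) / 2) = s' ^ 3 := by
    rw [hsdef', Real.sqrt_eq_rpow, ← Real.rpow_natCast (w' ^ ((1:ℝ)/2)) 3,
      ← Real.rpow_mul hw'.le]
    norm_num
  rw [hrw, hrw']
  -- left side equals -((t-v)^2*(2t+v))/(27 w^2)
  have hu2 : u = (t ^ 2 - v ^ 2) / (3 * w) := by
    rw [ht2]; field_simp; ring
  have hxval : x = (t - v) / (3 * w) := rfl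
  have hL : -u * x + v * x ^ 2 + w * x ^ 3 = -((t - v) ^ 2 * (2 * t + v)) / (27 * w ^ 2) := by
    rw [hxval, hu2]
    field_simp
    ring
  have hR : (t' - v) * (v * t' - v ^ 2 - 6 * u * w') = -((t' - v) ^ 2 * (2 * t' + v)) := by
    linear_combination (2 * (t' - v)) * ht2'
  rw [hL]
  have hRfull : 1 / (27 * s * s' ^ 3) * (t' - v) * (v * t' - v ^ 2 - 6 * u * w')
      = -((t' - v) ^ 2 * (2 * t' + v)) / (27 * s * s' ^ 3) := by
    field_simp
    linear_combination (2 * (t' - v)) * ht2'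
  rw [hRfull]
  set A : ℝ := (t - v) ^ 2 * (2 * t + v) with hA
  set A' : ℝ := (t' - v) ^ 2 * (2 * t' + v) with hA'
  have hAnn : 0 ≤ A := mul_nonneg (sq_nonneg _) (by linarith)
  have hA'nn : 0 ≤ A' := mul_nonneg (sq_nonneg _) (by linarith)
  have h3uw : 3 * u * w = t ^ 2 - v ^ 2 := by linarith [ht2]
  have h3uw' : 3 * u * w' = t' ^ 2 - v ^ 2 := by linarith [ht2']
  have hkey := key_poly v t t' hv hvt'.le htt'
  have hmul : A' ^ 2 * (t ^ 2 - v ^ 2) ^ 3 ≤ A ^ 2 * (t' ^ 2 - v ^ 2) ^ 3 := by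
    have h3 : (0:ℝ) ≤ (t' - v) ^ 3 * (t - v) ^ 3 := by
      apply mul_nonneg <;> [exact pow_nonneg (by linarith) 3; exact pow_nonneg (by linarith) 3]
    calc A' ^ 2 * (t ^ 2 - v ^ 2) ^ 3
        = ((t' - v) * (2 * t' + v) ^ 2 * (t + v) ^ 3) * ((t' - v) ^ 3 * (t - v) ^ 3) := by
          rw [hA']; ring
      _ ≤ ((t - v) * (2 * t + v) ^ 2 * (t' + v) ^ 3) * ((t' - v) ^ 3 * (t - v) ^ 3) :=
          mul_le_mul_of_nonneg_right hkey h3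
      _ = A ^ 2 * (t' ^ 2 - v ^ 2) ^ 3 := by rw [hA]; ring
  have hw3 : A' ^ 2 * w ^ 3 ≤ A ^ 2 * w' ^ 3 := by
    have h27 : (0:ℝ) < (3 * u) ^ 3 := by positivity
    apply le_of_mul_le_mul_right _ h27
    calc A' ^ 2 * w ^ 3 * (3 * u) ^ 3 = A' ^ 2 * (3 * u * w) ^ 3 := by ring
      _ = A' ^ 2 * (t ^ 2 - v ^ 2) ^ 3 := by rw [h3uw]
      _ ≤ A ^ 2 * (t' ^ 2 - v ^ 2) ^ 3 := hmul
      _ = A ^ 2 * (3 * u * w') ^ 3 := by rw [h3uw']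
      _ = A ^ 2 * w' ^ 3 * (3 * u) ^ 3 := by ring
  have hsq : (A' * s ^ 3) ^ 2 ≤ (A * s' ^ 3) ^ 2 := by
    calc (A' * s ^ 3) ^ 2 = A' ^ 2 * (s ^ 2) ^ 3 := by ring
      _ = A' ^ 2 * w ^ 3 := by rw [hs]
      _ ≤ A ^ 2 * w' ^ 3 := hw3
      _ = A ^ 2 * (s' ^ 2) ^ 3 := by rw [hs']
      _ = (A * s' ^ 3) ^ 2 := by ring
  have hkey2 : A' * s ^ 3 ≤ A * s' ^ 3 := by
    have h1nn : 0 ≤ A' * s ^ 3 := mul_nonneg hA'nn (pow_nonneg hspos.le 3)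
    have h2nn : 0 ≤ A * s' ^ 3 := mul_nonneg hAnn (pow_nonneg hs'pos.le 3)
    have h := Real.sqrt_le_sqrt hsq
    rwa [Real.sqrt_sq h1nn, Real.sqrt_sq h2nn] at h
  rw [div_le_div_iff₀ (by positivity) (by positivity)]
  have hw2 : w ^ 2 = s ^ 4 := by rw [← hs]; ring
  have hstep : A' * s ^ 3 * s ≤ A * s' ^ 3 * s := mul_le_mul_of_nonneg_right hkey2 hspos.le
  calc -A * (27 * s * s' ^ 3) = -27 * (A * s' ^ 3 * s) := by ring
    _ ≤ -27 * (A' * s ^ 3 * s) := by linarith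
    _ = -A' * (27 * s ^ 4) := by ring
    _ = -A' * (27 * w ^ 2) := by rw [hw2]
end

section
/- The function g(u,v,w) = w^(-3/2)·(√(v²+3uw) - v)·(v√(v²+3uw) - v² - 6uw) is nonincreasing in w for fixed u, v > 0; indeed ∂g/∂w = -(3v/(2w^(5/2)))·(2v² + 3uw - 2v√(v²+3uw)) ≤ 0 since 2v² + 3uw ≥ 2v√(v²+3uw) for all u, v, w > 0. -/
open Real Set

lemma antitoneOn_Ioi_of_hasDerivAt_nonpos {f f' : ℝ → ℝ} {a : ℝ}
    (hf : ∀ x ∈ Ioi a, HasDerivAt f (f' x) x) (hf' : ∀ x ∈ Ioi a, f' x ≤ 0) :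
    AntitoneOn f (Ioi a) := by
  refine antitoneOn_of_hasDerivWithinAt_nonpos (f' := f') (convex_Ioi a)
    (fun x hx => (hf x hx).continuousAt.continuousWithinAt) ?_ ?_ <;> rw [interior_Ioi]
  · exact fun x hx => (hf x hx).hasDerivWithinAt
  · exact hf'

lemma two_mul_mul_sqrt_le_sq_add (a : ℝ) {x : ℝ} (hx : 0 ≤ x) : 2 * a * √x ≤ a ^ 2 + x := by
  simpa [sq_sqrt hx] using two_mul_le_add_sq a √x

namespace MonotoneProfile

variable (u v : ℝ)

noncomputable def g (w : ℝ) : ℝ :=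
  w ^ (-(3 : ℝ) / 2) * ((√(v ^ 2 + 3 * u * w) - v) * (v * √(v ^ 2 + 3 * u * w) - v ^ 2 - 6 * u * w))

noncomputable def g' (w : ℝ) : ℝ :=
  -(3 * v / (2 * w ^ ((5 : ℝ) / 2))) * (2 * v ^ 2 + 3 * u * w - 2 * v * √(v ^ 2 + 3 * u * w))

variable {u v}

lemma hasDerivAt_g {w : ℝ} (hw : 0 < w) (hx : 0 < v ^ 2 + 3 * u * w) :
    HasDerivAt (g u v) (g' u v w) w := by
  set s := √(v ^ 2 + 3 * u * w) with hs
  have hs0 : 0 < s := sqrt_pos.2 hx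
  have hsqrt : HasDerivAt (fun w => √(v ^ 2 + 3 * u * w)) (3 * u / (2 * s)) w := by
    simpa using (((hasDerivAt_id w).const_mul (3 * u)).const_add (v ^ 2)).sqrt hx.ne'
  have hpow := hasDerivAt_rpow_const (p := -(3 : ℝ) / 2) (Or.inl hw.ne')
  have hprod : HasDerivAt
      (fun w => (√(v ^ 2 + 3 * u * w) - v) * (v * √(v ^ 2 + 3 * u * w) - v ^ 2 - 6 * u * w))
      (3 * u / (2 * s) * (v * s - v ^ 2 - 6 * u * w) + (s - v) * (v * (3 * u / (2 * s)) - 6 * u))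
      w := by
    have hsecond := ((hsqrt.const_mul v).sub_const (v ^ 2)).fun_sub
      ((hasDerivAt_id' w).const_mul (6 * u))
    exact ((hsqrt.sub_const v).fun_mul hsecond).congr_deriv (by ring)
  refine (hpow.mul hprod).congr_deriv ?_
  -- Eliminating `u` via `3uw = s² - v²` leaves a rational identity in `w`, `s`, `v` and `w ^ (-3/2)`.
  have hu : u = (s ^ 2 - v ^ 2) / (3 * w) := by
    rw [hs, sq_sqrt hx.le]; field_simp; ring
  have h52 : w ^ ((5 : ℝ) / 2) = w / w ^ (-(3 : ℝ) / 2) := by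
    rw [show (5 : ℝ) / 2 = 1 - (-3 / 2) by norm_num, rpow_sub hw, rpow_one]
  have hq : 0 < w ^ (-(3 : ℝ) / 2) := rpow_pos_of_pos hw _
  rw [g', rpow_sub_one hw.ne', h52, ← hs, hu]
  field_simp
  ring

lemma g'_nonpos (hv : 0 ≤ v) {w : ℝ} (hw : 0 ≤ w) (hx : 0 ≤ v ^ 2 + 3 * u * w) : g' u v w ≤ 0 := by
  have hgap : 0 ≤ 2 * v ^ 2 + 3 * u * w - 2 * v * √(v ^ 2 + 3 * u * w) := by
    linarith [two_mul_mul_sqrt_le_sq_add v hx]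
  have hcoef : 0 ≤ 3 * v / (2 * w ^ ((5 : ℝ) / 2)) := by positivity
  exact mul_nonpos_of_nonpos_of_nonneg (neg_nonpos.2 hcoef) hgap

end MonotoneProfile

open MonotoneProfile in
theorem stmt_12 (u v : ℝ) (hu : 0 < u) (hv : 0 < v) :
    let g : ℝ → ℝ := fun w => w ^ (-(3 : ℝ) / 2) *
      ((Real.sqrt (v ^ 2 + 3 * u * w) - v) *
        (v * Real.sqrt (v ^ 2 + 3 * u * w) - v ^ 2 - 6 * u * w))
    (∀ w : ℝ, 0 < w → HasDerivAt g
        (-(3 * v / (2 * w ^ ((5 : ℝ) / 2))) *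
          (2 * v ^ 2 + 3 * u * w - 2 * v * Real.sqrt (v ^ 2 + 3 * u * w))) w) ∧
    (∀ w : ℝ, 0 < w →
      2 * v * Real.sqrt (v ^ 2 + 3 * u * w) ≤ 2 * v ^ 2 + 3 * u * w) ∧
    AntitoneOn g (Set.Ioi 0) := by
  have hx : ∀ w : ℝ, 0 < w → 0 < v ^ 2 + 3 * u * w := fun w hw => by positivity
  refine ⟨fun w hw => hasDerivAt_g hw (hx w hw), fun w hw => ?_,
    antitoneOn_Ioi_of_hasDerivAt_nonpos (fun w hw => hasDerivAt_g hw (hx w hw))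
      (fun w hw => g'_nonpos hv.le hw.le (hx w hw).le)⟩
  linarith [two_mul_mul_sqrt_le_sq_add v (hx w hw).le]
end

section
/- Let κ = (9-√17)/32. Then for every x with 0 < x ≤ 1, ln(1+x) < x(1 - 2κx), and for every x > 1, ln(1+x) < (1-2κ)x. Consequently, for every n ≥ 1 and r > 0, r/2 - (n/2)ln(1 + r/n) > κ·min{r²/n, r}, i.e., the m_∞-bound (1+r/n)^(n/2)e^(-r/2) is strictly smaller than the relaxed HW bound exp(-κ·min{r²/n, r}). -/
/-!
With `c = 2κ`, the gap `f(x) = x - c x² - log(1 + x)` has derivative `x (1 - 2c(1 + x)) / (1 + x)`,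
so `f` increases up to `x = 1/(2c) - 1` and decreases afterwards; since `f 0 = 0` and
`f 1 = 1 - c - log 2 > 0`, it is positive on `(0, 1]`. For `x > 1` the concavity bound
`log((1 + x)/2) ≤ (x - 1)/2` reduces the claim to the same inequality `c + log 2 < 1`, which is what
the value of `κ` guarantees. Substituting `x = r/n` and multiplying by `n/2` gives the comparison
of exponents.
-/

open Real Set

lemma hasDerivAt_sub_mul_sq_sub_log_one_add (c y : ℝ) (hy : 0 < 1 + y) :
    HasDerivAt (fun t => t - c * t ^ 2 - log (1 + t)) (y * (1 - 2 * c * (1 + y)) / (1 + y)) y := by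
  have hlog : HasDerivAt (fun t => log (1 + t)) (1 / (1 + y)) y := by
    simpa using ((hasDerivAt_id y).const_add 1).log hy.ne'
  have hsq : HasDerivAt (fun t => c * t ^ 2) (c * (2 * y)) y := by
    simpa using (hasDerivAt_pow 2 y).const_mul c
  refine (((hasDerivAt_id' y).sub hsq).sub hlog).congr_deriv ?_
  field_simp
  ring

lemma log_one_add_lt_mul_one_sub_mul {c x : ℝ} (hc : 0 < c) (hc_log : c + log 2 < 1)
    (hx : 0 < x) (hx1 : x ≤ 1) : log (1 + x) < x * (1 - c * x) := by
  set f : ℝ → ℝ := fun t => t - c * t ^ 2 - log (1 + t) with hf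
  set a := 1 / (2 * c) - 1
  have ha : 0 < a := by
    have : 1 < 1 / (2 * c) := by
      rw [lt_div_iff₀ (by positivity)]
      linarith [log_two_gt_d9]
    linarith
  have hderiv (y : ℝ) (hy : 0 < 1 + y) := hasDerivAt_sub_mul_sq_sub_log_one_add c y hy
  have hcont (s : Set ℝ) (hs : ∀ y ∈ s, 0 ≤ y) : ContinuousOn f s := fun y hy =>
    (hderiv y (by linarith [hs y hy])).continuousAt.continuousWithinAt
  have hfactor (y : ℝ) : 1 - 2 * c * (1 + y) = 2 * c * (a - y) := by
    simp only [a]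
    field_simp
    ring
  have hmono : StrictMonoOn f (Icc 0 a) := by
    refine strictMonoOn_of_deriv_pos (convex_Icc 0 a) (hcont _ fun y hy => hy.1) ?_
    rw [interior_Icc]
    rintro y ⟨hy0, hya⟩
    have : 0 < a - y := sub_pos.2 hya
    rw [(hderiv y (by linarith)).deriv, hfactor]
    positivity
  have hanti : StrictAntiOn f (Ici a) := by
    refine strictAntiOn_of_deriv_neg (convex_Ici a) (hcont _ fun y hy => ha.le.trans hy) ?_
    rw [interior_Ici]
    intro y hya
    have hy0 : 0 < y := ha.trans hya
    have : 2 * c * (a - y) < 0 := mul_neg_of_pos_of_neg (by positivity) (sub_neg.2 hya)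
    rw [(hderiv y (by linarith)).deriv, hfactor]
    exact div_neg_of_neg_of_pos (mul_neg_of_pos_of_neg hy0 this) (by linarith)
  have hfx : 0 < f x := by
    rcases le_or_gt x a with hxa | hxa
    · simpa [hf] using hmono ⟨le_rfl, ha.le⟩ ⟨hx.le, hxa⟩ hx
    · have hf1 : 0 < f 1 := by norm_num [hf]; linarith
      exact hf1.trans_le (hanti.antitoneOn (mem_Ici.2 hxa.le) (mem_Ici.2 (hxa.le.trans hx1)) hx1)
  simp only [hf] at hfx
  linarith

lemma log_one_add_lt_one_sub_mul {c x : ℝ} (hc_log : c + log 2 < 1) (hx : 1 < x) :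
    log (1 + x) < (1 - c) * x := by
  have hhalf : 0 < (1 + x) / 2 := by linarith
  have hsplit : log (1 + x) = log 2 + log ((1 + x) / 2) := by
    rw [← log_mul two_ne_zero hhalf.ne']
    ring_nf
  have hconc := log_le_sub_one_of_pos hhalf
  have hc_half : c < 1 / 2 := by linarith [log_two_gt_d9]
  nlinarith

lemma mul_min_lt_sub_mul_log_one_add {κ n r : ℝ} (hκ : 0 < κ) (hκ_log : 2 * κ + log 2 < 1)
    (hn : 0 < n) (hr : 0 < r) :
    κ * min (r ^ 2 / n) r < r / 2 - n / 2 * log (1 + r / n) := by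
  have hn2 : 0 < n / 2 := by positivity
  rcases le_or_gt r n with hrn | hnr
  · have hmin : min (r ^ 2 / n) r = r ^ 2 / n := by
      rw [min_eq_left_iff, div_le_iff₀ hn]
      nlinarith
    have hlog := log_one_add_lt_mul_one_sub_mul (by positivity) hκ_log (div_pos hr hn)
      ((div_le_one hn).2 hrn)
    have hscaled := mul_lt_mul_of_pos_left hlog hn2
    have hrw : n / 2 * (r / n * (1 - 2 * κ * (r / n))) = r / 2 - κ * (r ^ 2 / n) := by
      field_simp
    rw [hmin]
    linarith
  · have hmin : min (r ^ 2 / n) r = r := by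
      rw [min_eq_right_iff, le_div_iff₀ hn]
      nlinarith
    have hlog := log_one_add_lt_one_sub_mul hκ_log ((one_lt_div hn).2 hnr)
    have hscaled := mul_lt_mul_of_pos_left hlog hn2
    have hrw : n / 2 * ((1 - 2 * κ) * (r / n)) = r / 2 - κ * r := by
      field_simp
    rw [hmin]
    linarith

lemma rpow_mul_exp_lt_exp_of_lt_sub_mul_log {n r b : ℝ} (hbase : 0 < 1 + r / n)
    (h : b < r / 2 - n / 2 * log (1 + r / n)) :
    (1 + r / n) ^ (n / 2) * exp (-r / 2) < exp (-b) := by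
  rw [rpow_def_of_pos hbase, ← exp_add, exp_lt_exp]
  linarith

lemma sqrt_seventeen_kappa_bounds :
    0 < (9 - √17) / 32 ∧ 2 * ((9 - √17) / 32) + log 2 < 1 := by
  have h17 : 4.1 < √17 := by
    rw [lt_sqrt (by norm_num)]
    norm_num
  have h17' : √17 < 9 := by
    rw [sqrt_lt' (by norm_num)]
    norm_num
  constructor
  · linarith
  · linarith [log_two_lt_d9]

theorem stmt_13 :
    let κ : ℝ := (9 - Real.sqrt 17) / 32;
    (∀ x : ℝ, 0 < x → x ≤ 1 → Real.log (1 + x) < x * (1 - 2 * κ * x)) ∧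
    (∀ x : ℝ, 1 < x → Real.log (1 + x) < (1 - 2 * κ) * x) ∧
    (∀ n : ℕ, 1 ≤ n → ∀ r : ℝ, 0 < r →
      κ * min (r ^ 2 / n) r < r / 2 - (n : ℝ) / 2 * Real.log (1 + r / n) ∧
      (1 + r / n) ^ ((n : ℝ) / 2) * Real.exp (-r / 2) <
        Real.exp (-κ * min (r ^ 2 / n) r)) := by
  intro κ
  obtain ⟨hκ, hκ_log⟩ := sqrt_seventeen_kappa_bounds
  refine ⟨fun x hx hx1 => log_one_add_lt_mul_one_sub_mul (by positivity) hκ_log hx hx1,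
    fun x hx => log_one_add_lt_one_sub_mul hκ_log hx, fun n hn r hr => ?_⟩
  have hn : (0 : ℝ) < n := by exact_mod_cast hn
  have hgap := mul_min_lt_sub_mul_log_one_add hκ hκ_log hn hr
  refine ⟨hgap, ?_⟩
  rw [neg_mul]
  exact rpow_mul_exp_lt_exp_of_lt_sub_mul_log (by positivity) hgap
end

section
/- For every x > 0, ln(1+x) < √(1+2x) - 1. Consequently, for every n ≥ 1 and r > 0, (1 + r/n)^(n/2)·e^(-r/2) < exp(-(n/4)(√(1+2r/n) - 1)²), i.e., the m_∞-bound is strictly tighter than the relaxed LM bound. -/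
/-!
Put `s = √(1 + 2x)`. Then `1 + x = 1 + (s - 1) + (s - 1)² / 2`, which is strictly below `exp (s - 1)`
as `s > 1`; taking logarithms gives the first claim. For the second, with `x = r / n` both sides are
exponentials and `-(n/4)(s - 1)² = (n/2)(s - 1) - r/2`, so the comparison of exponents is `n/2` times
the first claim.
-/

open Real

lemma Real.one_add_add_sq_div_two_lt_exp {t : ℝ} (ht : 0 < t) : 1 + t + t ^ 2 / 2 < exp t := by
  have h := sum_le_exp_of_nonneg ht.le 4
  simp only [Finset.sum_range_succ, Finset.sum_range_zero, Nat.factorial] at h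
  norm_num at h
  nlinarith [pow_pos ht 3]

lemma Real.log_one_add_lt_sqrt_one_add_two_mul_sub_one {x : ℝ} (hx : 0 < x) :
    log (1 + x) < √(1 + 2 * x) - 1 := by
  have hs_sq : √(1 + 2 * x) ^ 2 = 1 + 2 * x := sq_sqrt (by linarith)
  have hs_gt : 1 < √(1 + 2 * x) := by nlinarith [sqrt_nonneg (1 + 2 * x)]
  rw [log_lt_iff_lt_exp (by linarith)]
  calc 1 + x = 1 + (√(1 + 2 * x) - 1) + (√(1 + 2 * x) - 1) ^ 2 / 2 := by nlinarith
    _ < exp (√(1 + 2 * x) - 1) := one_add_add_sq_div_two_lt_exp (by linarith)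

lemma Real.one_add_div_rpow_mul_exp_lt {a r : ℝ} (ha : 0 < a) (hr : 0 < r) :
    (1 + r / a) ^ (a / 2) * exp (-r / 2) < exp (-(a / 4) * (√(1 + 2 * r / a) - 1) ^ 2) := by
  have hx : 0 < r / a := div_pos hr ha
  have hlog := log_one_add_lt_sqrt_one_add_two_mul_sub_one hx
  rw [mul_div_assoc]
  have hs_sq : √(1 + 2 * (r / a)) ^ 2 = 1 + 2 * (r / a) := sq_sqrt (by linarith)
  have hr_eq : r = a * (r / a) := by field_simp
  rw [rpow_def_of_pos (by linarith), ← exp_add, exp_lt_exp]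
  nlinarith [mul_lt_mul_of_pos_left hlog (half_pos ha)]

theorem stmt_14 :
    (∀ x : ℝ, 0 < x → Real.log (1 + x) < Real.sqrt (1 + 2 * x) - 1) ∧
    (∀ n : ℕ, 1 ≤ n → ∀ r : ℝ, 0 < r →
      (1 + r / n) ^ ((n : ℝ) / 2) * Real.exp (-r / 2) <
        Real.exp (-((n : ℝ) / 4) * (Real.sqrt (1 + 2 * r / n) - 1) ^ 2)) :=
  ⟨fun _ hx => log_one_add_lt_sqrt_one_add_two_mul_sub_one hx,
    fun _ hn _ hr => one_add_div_rpow_mul_exp_lt (by exact_mod_cast hn) hr⟩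
end

section
/- For every even integer n ≥ 8, (1 + 1/n)^(n/2) < (1/√e)·Σ_{i=0}^{n/2 - 1} 1/i!. -/
/-!
Write `y = 1/(2m)`. Since `(1 + y)(1 + y²/(2(1 + y))) = 1 + y + y²/2 ≤ exp y`, Bernoulli's inequality
sharpens `(1 + y)^m ≤ exp (1/2)` to `(1 + y)^m (1 + 1/(8m + 4)) ≤ exp (1/2)`. On the other side, the
tail of the exponential series gives `∑_{i<m} 1/i! ≥ e - (m + 1)/(m · m!)`, and for `m ≥ 4` this
tail is below `e/(8m + 5)`, so `e < (1 + 1/(8m + 4)) ∑_{i<m} 1/i!`. Multiplying the first bound by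
`exp (1/2)` and comparing with the second gives the claim.
-/

open Real Finset

lemma one_add_mul_one_add_sq_div_le_exp {y : ℝ} (hy : 0 ≤ y) :
    (1 + y) * (1 + y ^ 2 / (2 * (1 + y))) ≤ exp y := by
  have hfactor : (1 + y) * (1 + y ^ 2 / (2 * (1 + y))) = 1 + y + y ^ 2 / 2 := by
    field_simp
  exact hfactor ▸ quadratic_le_exp_of_nonneg hy

lemma one_add_pow_mul_le_exp {y : ℝ} (hy : 0 ≤ y) (m : ℕ) :
    (1 + y) ^ m * (1 + m * (y ^ 2 / (2 * (1 + y)))) ≤ exp (m * y) := by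
  have hs : 0 ≤ y ^ 2 / (2 * (1 + y)) := by positivity
  calc (1 + y) ^ m * (1 + m * (y ^ 2 / (2 * (1 + y))))
      ≤ (1 + y) ^ m * (1 + y ^ 2 / (2 * (1 + y))) ^ m := by
        gcongr
        exact one_add_mul_le_pow (by linarith) m
    _ = ((1 + y) * (1 + y ^ 2 / (2 * (1 + y)))) ^ m := (mul_pow _ _ _).symm
    _ ≤ exp y ^ m := by gcongr; exact one_add_mul_one_add_sq_div_le_exp hy
    _ = exp (m * y) := (exp_nat_mul y m).symm

lemma one_add_inv_two_mul_pow_mul_le_exp_half {m : ℕ} (hm : 0 < m) :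
    (1 + 1 / (2 * m : ℝ)) ^ m * (1 + 1 / (8 * m + 4)) ≤ exp (1 / 2) := by
  have hm' : (0 : ℝ) < m := by exact_mod_cast hm
  have key := one_add_pow_mul_le_exp (y := 1 / (2 * m)) (by positivity) m
  have hcorr : (m : ℝ) * ((1 / (2 * m)) ^ 2 / (2 * (1 + 1 / (2 * m)))) = 1 / (8 * m + 4) := by
    field_simp
    ring
  have hexp : (m : ℝ) * (1 / (2 * m)) = 1 / 2 := by field_simp
  rwa [hcorr, hexp] at key

lemma ten_mul_succ_mul_eight_mul_add_five_le {m : ℕ} (hm : 4 ≤ m) :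
    10 * (m + 1) * (8 * m + 5) ≤ 27 * (m * m.factorial) := by
  obtain ⟨k, rfl⟩ : ∃ k, m = k + 1 := ⟨m - 1, by omega⟩
  have h6 : 6 ≤ k.factorial := Nat.factorial_le (by omega : 3 ≤ k)
  rw [Nat.factorial_succ]
  nlinarith [Nat.mul_le_mul_left ((k + 1) * (k + 1)) h6]

lemma exp_one_lt_sum_range_inv_factorial_mul {m : ℕ} (hm : 4 ≤ m) :
    exp 1 < (∑ i ∈ range m, (1 : ℝ) / i.factorial) * (1 + 1 / (8 * m + 4)) := by
  have hm' : (4 : ℝ) ≤ m := by exact_mod_cast hm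
  have hfact : (0 : ℝ) < m.factorial * m := by positivity
  have hsum := exp_bound' zero_le_one le_rfl (n := m) (by omega)
  simp only [one_pow, one_mul] at hsum
  have hcount : 10 * ((m : ℝ) + 1) * (8 * m + 5) ≤ 27 * (m * m.factorial) := by
    exact_mod_cast ten_mul_succ_mul_eight_mul_add_five_le hm
  -- the tail `(m + 1)/(m · m!)` is less than `e/(8m + 5)`, using `e > 2.7`
  have htail : (m + 1) / (m.factorial * m) * (8 * m + 5) < exp 1 := by
    rw [div_mul_eq_mul_div, div_lt_iff₀ hfact]
    nlinarith [exp_one_gt_d9]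
  rw [show (1 : ℝ) + 1 / (8 * m + 4) = (8 * m + 5) / (8 * m + 4) by field_simp; ring,
    mul_div_assoc', lt_div_iff₀ (by positivity)]
  nlinarith

theorem stmt_16 (n : ℕ) (hn : Even n) (hn8 : 8 ≤ n) :
    (1 + 1 / (n : ℝ)) ^ (n / 2) <
      (Real.sqrt (Real.exp 1))⁻¹ *
        ∑ i ∈ Finset.range (n / 2), (1 : ℝ) / i.factorial := by
  obtain ⟨m, rfl⟩ := hn
  have hm : 4 ≤ m := by omega
  have hhalf : (m + m) / 2 = m := by omega
  have hcast : ((m + m : ℕ) : ℝ) = 2 * m := by push_cast; ring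
  rw [hhalf, hcast, ← exp_half, lt_inv_mul_iff₀ (exp_pos _)]
  have hcorr : (0 : ℝ) < 1 + 1 / (8 * m + 4) := by positivity
  refine lt_of_mul_lt_mul_right ?_ hcorr.le
  calc exp (1 / 2) * (1 + 1 / (2 * m)) ^ m * (1 + 1 / (8 * m + 4))
      ≤ exp (1 / 2) * exp (1 / 2) := by
        rw [mul_assoc]
        gcongr
        exact one_add_inv_two_mul_pow_mul_le_exp_half (by omega)
    _ = exp 1 := by rw [← exp_add]; norm_num
    _ < _ := exp_one_lt_sum_range_inv_factorial_mul hm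
end

section
/- For every integer m ≥ 5 and every integer j with 2 ≤ j ≤ m-1, ((m-1)(m-2)···(m-j+1))/m^{j-1} < (m - j - 1/2)/(m - j). -/
/-!
Writing `n = m - j`, the right-hand side is `1 - 1/(2n)`. Passing from `j` to `j + 1` multiplies
the left-hand side by `(m - j)/m`, which cancels the denominator of the bound and leaves
`(n - 1/2)/m`; this is at most `1 - 1/(2(n - 1))` as soon as `j ≥ 1` and `n ≥ 2`. The case `j = 2`
is `(m - 1)/m < (m - 5/2)/(m - 2)`, i.e. `m > 4`.
-/

open Finset

lemma sub_half_div_le_sub_one_sub_half_div {m j : ℝ} (hj : 1 ≤ j) (hjm : j + 2 ≤ m) :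
    (m - j - 1 / 2) / m ≤ (m - (j + 1) - 1 / 2) / (m - (j + 1)) := by
  rw [div_le_div_iff₀ (by linarith) (by linarith)]
  nlinarith [mul_le_mul hj (by linarith : 1 ≤ m - j - 1) zero_le_one (by linarith)]

lemma sub_one_div_lt_sub_two_sub_half_div {m : ℝ} (hm : 4 < m) :
    (m - 1) / m < (m - 2 - 1 / 2) / (m - 2) := by
  rw [div_lt_div_iff₀ (by linarith) (by linarith)]
  linarith

lemma prod_Icc_sub_div_pow_lt {m : ℝ} (hm : 4 < m) {k : ℕ} (hk : 1 ≤ k) (hkm : (k : ℝ) + 2 ≤ m) :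
    (∏ i ∈ Icc 1 k, (m - i)) / m ^ k < (m - (k + 1) - 1 / 2) / (m - (k + 1)) := by
  induction k, hk using Nat.le_induction with
  | base => simpa [one_add_one_eq_two] using sub_one_div_lt_sub_two_sub_half_div hm
  | succ k hk ih =>
    push_cast at hkm ⊢
    have hk1 : (1 : ℝ) ≤ k := by exact_mod_cast hk
    have hsplit : (∏ i ∈ Icc 1 (k + 1), (m - i)) / m ^ (k + 1)
        = (∏ i ∈ Icc 1 k, (m - i)) / m ^ k * ((m - (k + 1)) / m) := by
      rw [prod_Icc_succ_top (by omega), pow_succ]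
      push_cast
      field_simp
    calc (∏ i ∈ Icc 1 (k + 1), (m - i)) / m ^ (k + 1)
        < (m - (k + 1) - 1 / 2) / (m - (k + 1)) * ((m - (k + 1)) / m) := by
          rw [hsplit]
          exact mul_lt_mul_of_pos_right (ih (by linarith)) (by apply div_pos <;> linarith)
      _ = (m - (k + 1) - 1 / 2) / m := by
          field_simp [(by linarith : m - (k + 1) ≠ 0)]
      _ ≤ (m - (k + 1 + 1) - 1 / 2) / (m - (k + 1 + 1)) :=
          sub_half_div_le_sub_one_sub_half_div (by linarith) (by linarith)

theorem stmt_18 (m j : ℕ) (hm : 5 ≤ m) (hj2 : 2 ≤ j) (hjm : j ≤ m - 1) :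
    (∏ i ∈ Finset.Icc 1 (j - 1), ((m : ℝ) - i)) / (m : ℝ) ^ (j - 1) <
      ((m : ℝ) - j - 1 / 2) / ((m : ℝ) - j) := by
  obtain ⟨k, rfl⟩ : ∃ k, j = k + 1 := ⟨j - 1, by omega⟩
  have hkm : ((k : ℝ) + 2) ≤ m := by exact_mod_cast (by omega : k + 2 ≤ m)
  have hm4 : (4 : ℝ) < m := by exact_mod_cast (by omega : 4 < m)
  simpa using prod_Icc_sub_div_pow_lt hm4 (by omega : 1 ≤ k) hkm
end

section
/- For every integer m ≥ 4, one has (m-1)! < (m-1)^{m-1/2}·e^{2-m}; consequently 2^m < (1/√e)·(m+1/2)^{m-1}/(m-1)! holds for all sufficiently large m, which implies P_{2m}^{(1)}(2m) < P_{2m}^{(2)}(2m) and hence r'_{2m} > 2m for all sufficiently large m. -/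
/-!
The sequence `n! / (√(2n) (n/e)^n)` decreases from its value `e²/4` at `n = 2`, and
`√2 · e²/4 < e`; this gives `n! < n^(n+1/2) e^(1-n)` for `n ≥ 2`. Hence `2^(n+1) n!` is at most
`n^n · 2e √n (2/e)^n`, and since `√n (2/e)^n → 0` it is eventually below `c (n + 3/2)^n` for
every `c > 0`. Keeping only the top term of the sum defining `P₂` gives `P₁(2m) = 2^m < P₂(2m)`.
As `P₁` has degree `m` and `P₂` degree `m - 1`, `P₁` wins again at some explicit large `r₀`, and
the intermediate value theorem produces a solution of `P₁ = P₂` beyond `2m`.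
-/

open Real Filter Finset
open scoped Nat

namespace Stirling

theorem stirlingSeq_two : stirlingSeq 2 = exp 1 ^ 2 / 4 := by
  have h : √(2 * (2 : ℕ) : ℝ) = 2 := by
    rw [show (2 * (2 : ℕ) : ℝ) = 2 ^ 2 by norm_num, Real.sqrt_sq zero_le_two]
  rw [stirlingSeq, h, div_pow]
  field_simp
  norm_num [Nat.factorial]

theorem stirlingSeq_le_stirlingSeq_two {n : ℕ} (hn : 2 ≤ n) : stirlingSeq n ≤ stirlingSeq 2 := by
  obtain ⟨k, rfl⟩ := Nat.exists_eq_add_of_le' hn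
  exact stirlingSeq'_antitone (show 1 ≤ k + 1 by omega)

end Stirling

theorem exp_one_mul_sqrt_two_lt_four : exp 1 * √2 < 4 := by
  have hsqrt : √2 < 1.415 := by rw [Real.sqrt_lt' (by norm_num)]; norm_num
  nlinarith [Real.exp_one_lt_d9, Real.exp_pos 1, Real.sqrt_nonneg 2]

theorem factorial_lt_pow_mul_sqrt_mul_exp {n : ℕ} (hn : 2 ≤ n) :
    (n ! : ℝ) < n ^ n * √n * exp (1 - n) := by
  have hscale : 0 < √(2 * n : ℝ) * ((n : ℝ) / exp 1) ^ n := by positivity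
  calc (n ! : ℝ) = Stirling.stirlingSeq n * (√(2 * n : ℝ) * ((n : ℝ) / exp 1) ^ n) := by
        rw [Stirling.stirlingSeq, div_mul_cancel₀ _ hscale.ne']
    _ ≤ exp 1 ^ 2 / 4 * (√(2 * n : ℝ) * ((n : ℝ) / exp 1) ^ n) := by
        rw [← Stirling.stirlingSeq_two]
        gcongr
        exact Stirling.stirlingSeq_le_stirlingSeq_two hn
    _ = exp 1 * √2 / 4 * (n ^ n * √n * exp (1 - n)) := by
        rw [Real.sqrt_mul zero_le_two, div_pow, Real.exp_sub, ← Real.exp_one_pow]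
        field_simp
    _ < n ^ n * √n * exp (1 - n) := by
        have : 0 < (n : ℝ) ^ n * √n * exp (1 - n) := by positivity
        nlinarith [exp_one_mul_sqrt_two_lt_four]

theorem factorial_pred_lt_rpow_mul_exp {m : ℕ} (hm : 3 ≤ m) :
    ((m - 1)! : ℝ) < ((m : ℝ) - 1) ^ ((m : ℝ) - 1 / 2) * exp (2 - m) := by
  obtain ⟨n, rfl⟩ := Nat.exists_eq_add_of_le' (show 1 ≤ m by omega)
  have hn : (0 : ℝ) < n := by exact_mod_cast (show 0 < n by omega)
  convert factorial_lt_pow_mul_sqrt_mul_exp (show 2 ≤ n by omega) using 1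
  · simp
  · push_cast
    rw [add_sub_cancel_right, show (n : ℝ) + 1 - 1 / 2 = n + 1 / 2 by ring,
      show (2 : ℝ) - (n + 1) = 1 - n by ring, Real.rpow_add hn, Real.rpow_natCast,
      Real.sqrt_eq_rpow]

theorem eventually_two_pow_mul_sqrt_mul_exp_lt {c : ℝ} (hc : 0 < c) :
    ∀ᶠ n : ℕ in atTop, 2 ^ (n + 1) * √n * exp (1 - n) < c := by
  have hr : |2 / exp 1| < 1 := by
    rw [abs_of_pos (by positivity), div_lt_one (exp_pos 1)]
    linarith [Real.exp_one_gt_d9]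
  have hlim := (tendsto_self_mul_const_pow_of_abs_lt_one hr).const_mul (2 * exp 1)
  rw [mul_zero] at hlim
  filter_upwards [hlim.eventually (gt_mem_nhds hc)] with n hn
  calc (2 : ℝ) ^ (n + 1) * √n * exp (1 - n) = 2 * exp 1 * (√n * (2 / exp 1) ^ n) := by
        rw [Real.exp_sub, ← Real.exp_one_pow, div_pow]
        ring
    _ ≤ 2 * exp 1 * (n * (2 / exp 1) ^ n) := by
        gcongr
        refine Real.sqrt_le_self_iff.mpr ?_
        rcases Nat.eq_zero_or_pos n with h | h
        · simp [h]
        · exact Or.inr (Nat.one_le_cast.mpr h)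
    _ < c := hn

theorem eventually_two_pow_mul_factorial_pred_lt {c : ℝ} (hc : 0 < c) :
    ∀ᶠ m : ℕ in atTop, 2 ^ m * ((m - 1)! : ℝ) < c * ((m : ℝ) + 1 / 2) ^ (m - 1) := by
  filter_upwards [eventually_ge_atTop 3,
    (tendsto_sub_atTop_nat 1).eventually (eventually_two_pow_mul_sqrt_mul_exp_lt hc)] with m hm hsmall
  obtain ⟨n, rfl⟩ := Nat.exists_eq_add_of_le' (show 1 ≤ m by omega)
  simp only [add_tsub_cancel_right] at hsmall ⊢
  have hn : (0 : ℝ) < n := by exact_mod_cast (show 0 < n by omega)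
  calc 2 ^ (n + 1) * (n ! : ℝ) < 2 ^ (n + 1) * (n ^ n * √n * exp (1 - n)) := by
        gcongr
        exact factorial_lt_pow_mul_sqrt_mul_exp (by omega)
    _ = (2 ^ (n + 1) * √n * exp (1 - n)) * n ^ n := by ring
    _ < c * n ^ n := by gcongr
    _ ≤ c * (((n + 1 : ℕ) : ℝ) + 1 / 2) ^ n := by
        gcongr
        push_cast
        linarith

/-- `P₁ m` and `P₂ m` are the paper's `P_{2m}^{(1)}` and `P_{2m}^{(2)}`. -/
noncomputable def P₁ (m : ℕ) (r : ℝ) : ℝ := (1 + r / (2 * m)) ^ m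

noncomputable def P₂ (m : ℕ) (r : ℝ) : ℝ :=
  (√(exp 1))⁻¹ * ∑ i ∈ range m, (1 + r) ^ i / (2 ^ i * i !)

theorem continuous_P₁ (m : ℕ) : Continuous (P₁ m) := by
  unfold P₁
  fun_prop

theorem continuous_P₂ (m : ℕ) : Continuous (P₂ m) := by
  unfold P₂
  fun_prop

theorem P₁_two_mul (m : ℕ) (hm : m ≠ 0) : P₁ m (2 * m) = 2 ^ m := by
  rw [P₁, div_self (by positivity)]
  norm_num

theorem div_pow_le_P₁ (m : ℕ) {r : ℝ} (hr : 0 ≤ r) : (r / (2 * m)) ^ m ≤ P₁ m r := by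
  unfold P₁
  gcongr
  linarith

theorem inv_sqrt_exp_one_pos : 0 < (√(exp 1))⁻¹ := by positivity

theorem inv_sqrt_exp_one_le_one : (√(exp 1))⁻¹ ≤ 1 :=
  inv_le_one_of_one_le₀ (Real.one_le_sqrt.mpr (Real.one_le_exp zero_le_one))

theorem mul_pow_div_factorial_le_P₂ {m : ℕ} (hm : m ≠ 0) {r : ℝ} (hr : -1 ≤ r) :
    (√(exp 1))⁻¹ * ((1 + r) / 2) ^ (m - 1) / ((m - 1)! : ℝ) ≤ P₂ m r := by
  have h1r : 0 ≤ 1 + r := by linarith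
  rw [P₂, mul_div_assoc, div_pow, div_div]
  gcongr
  exact single_le_sum (f := fun i => (1 + r) ^ i / (2 ^ i * i !))
    (fun i _ => by positivity) (mem_range.mpr (by omega))

theorem P₂_le_mul_pow {r : ℝ} (hr : 1 ≤ r) (m : ℕ) : P₂ m r ≤ m * r ^ (m - 1) := by
  calc P₂ m r ≤ ∑ i ∈ range m, (1 + r) ^ i / (2 ^ i * i !) :=
        mul_le_of_le_one_left (sum_nonneg fun i _ => by positivity) inv_sqrt_exp_one_le_one
    _ ≤ ∑ _i ∈ range m, r ^ (m - 1) := by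
        refine sum_le_sum fun i hi => ?_
        calc (1 + r) ^ i / (2 ^ i * i !) ≤ (1 + r) ^ i / 2 ^ i := by
              gcongr
              exact le_mul_of_one_le_right (by positivity) (by exact_mod_cast i.factorial_pos)
          _ = ((1 + r) / 2) ^ i := (div_pow _ _ _).symm
          _ ≤ r ^ i := by gcongr; linarith
          _ ≤ r ^ (m - 1) := pow_le_pow_right₀ hr (by rw [mem_range] at hi; omega)
    _ = m * r ^ (m - 1) := by rw [sum_const, card_range, nsmul_eq_mul]

/-- At `r₀ = m (2m)^m` the leading term `(r₀/2m)^m` of `P₁` equals the bound `m r₀^(m-1)`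
on `P₂`. -/
theorem P₂_le_P₁ {m : ℕ} (hm : m ≠ 0) :
    P₂ m (m * (2 * m) ^ m) ≤ P₁ m (m * (2 * m) ^ m) := by
  set r₀ : ℝ := m * (2 * m) ^ m
  have hm1 : (1 : ℝ) ≤ m := by exact_mod_cast Nat.one_le_iff_ne_zero.mpr hm
  have h2m : (1 : ℝ) ≤ 2 * m := by linarith
  have hr₀ : 1 ≤ r₀ := one_le_mul_of_one_le_of_one_le (by linarith) (one_le_pow₀ h2m)
  calc P₂ m r₀ ≤ m * r₀ ^ (m - 1) := P₂_le_mul_pow hr₀ m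
    _ = (r₀ / (2 * m)) ^ m := by
        rw [div_pow, eq_div_iff (by positivity), mul_comm, ← mul_assoc]
        conv_rhs => rw [← Nat.sub_add_cancel (Nat.one_le_iff_ne_zero.mpr hm), pow_succ]
        ring
    _ ≤ P₁ m r₀ := div_pow_le_P₁ m (by linarith)

theorem exists_gt_two_mul_P₁_eq_P₂ {m : ℕ} (hm : m ≠ 0) (h : P₁ m (2 * m) < P₂ m (2 * m)) :
    ∃ r, 2 * (m : ℝ) < r ∧ P₁ m r = P₂ m r := by
  have hm1 : (1 : ℝ) ≤ m := by exact_mod_cast Nat.one_le_iff_ne_zero.mpr hm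
  have hle : 2 * (m : ℝ) ≤ m * (2 * m) ^ m :=
    (le_self_pow₀ (by linarith) hm).trans (le_mul_of_one_le_left (by positivity) hm1)
  obtain ⟨r, hr, hr0⟩ := intermediate_value_Ioc hle
    ((continuous_P₁ m).sub (continuous_P₂ m)).continuousOn
    ⟨sub_neg.mpr h, sub_nonneg.mpr (P₂_le_P₁ hm)⟩
  exact ⟨r, hr.1, sub_eq_zero.mp hr0⟩

theorem stmt_19 :
    (∀ m : ℕ, 4 ≤ m →
      ((m - 1).factorial : ℝ) < ((m : ℝ) - 1) ^ ((m : ℝ) - 1 / 2) *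
        Real.exp (2 - m)) ∧
    (∃ M : ℕ, ∀ m : ℕ, M ≤ m →
      ((2 : ℝ) ^ m < (Real.sqrt (Real.exp 1))⁻¹ *
          ((m : ℝ) + 1 / 2) ^ (m - 1) / (m - 1).factorial) ∧
      ((2 : ℝ) ^ m < (Real.sqrt (Real.exp 1))⁻¹ *
          ∑ i ∈ Finset.range m, (1 + 2 * (m : ℝ)) ^ i / (2 ^ i * i.factorial)) ∧
      (∃ r : ℝ, 2 * (m : ℝ) < r ∧
        (1 + r / (2 * m)) ^ m = (Real.sqrt (Real.exp 1))⁻¹ *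
          ∑ i ∈ Finset.range m, (1 + r) ^ i / (2 ^ i * i.factorial))) := by
  refine ⟨fun m hm => factorial_pred_lt_rpow_mul_exp (by omega), ?_⟩
  obtain ⟨M, hM⟩ := eventually_atTop.mp
    ((eventually_two_pow_mul_factorial_pred_lt inv_sqrt_exp_one_pos).and (eventually_ne_atTop 0))
  refine ⟨M, fun m hmM => ?_⟩
  obtain ⟨hlt, hm⟩ := hM m hmM
  have hA : (2 : ℝ) ^ m < (√(exp 1))⁻¹ * ((m : ℝ) + 1 / 2) ^ (m - 1) / (m - 1)! := by
    rwa [lt_div_iff₀ (by positivity)]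
  have hB : 2 ^ m < P₂ m (2 * m) := by
    refine hA.trans_le ?_
    rw [show (m : ℝ) + 1 / 2 = (1 + 2 * m) / 2 by ring]
    exact mul_pow_div_factorial_le_P₂ hm (by linarith [m.cast_nonneg (α := ℝ)])
  exact ⟨hA, hB, exists_gt_two_mul_P₁_eq_P₂ hm ((P₁_two_mul m hm).trans_lt hB)⟩
end
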